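/- arXiv:2212.14512 — 8 statements merged into one kernel-verified Lean document; each statement's English description precedes it below -/
import Mathlib

section
/- Fix i,j ≥ 0. Assume that for every compact interval J ⊂ ℝ there is a Lebesgue-integrable function on (0,∞)×(0,∞) dominating, uniformly for t ∈ J, the entrywise norms of (x+y)^{-1} x^{i+1} y^j e^{t(x+y)} W(x)W(y) and (x+y)^{-1} x^i y^{j+1} e^{t(x+y)} W(x)W(y), and that all m_{k,l}(t) and φ_k(t) are finite. Then t ↦ m_{i,j}(t) is differentiable on ℝ and ∂_t m_{i,j}(t) = m_{i+1,j}(t) + m_{i,j+1}(t) = φ_i(t)·φ_j(t). -/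
open Matrix MeasureTheory Set

noncomputable section

/-! Differentiating under the integral sign, `∂ₜ e^{t(x+y)} = (x+y) e^{t(x+y)}`, and the factor
`x + y` cancels the Cauchy kernel `(x+y)⁻¹`. Hence `m_{i+1,j} + m_{i,j+1}` is the integral of
`x^i y^j e^{t(x+y)} W(x)W(y)`, whose integrand is a product of a function of `x` and a function
of `y`, so by Fubini it splits as `φ_i(t) φ_j(t)`. -/

/-- `M_p`: real `p × p` matrices. -/
abbrev Mp (p : ℕ) := Matrix (Fin p) (Fin p) ℝ

/-- Integrand of the matrix-valued Cauchy inner product: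
`(x + y)⁻¹ F(x) W(x) W(y) G(y)`. -/
def ipKer {p : ℕ} (W F G : ℝ → Mp p) : ℝ × ℝ → Mp p :=
  fun z => (z.1 + z.2)⁻¹ • (F z.1 * W z.1 * W z.2 * G z.2)

/-- Entrywise (Bochner/Lebesgue) integrability of the inner-product integrand on
`(0,∞) × (0,∞)`. -/
def IpInt {p : ℕ} (W F G : ℝ → Mp p) : Prop :=
  ∀ a b : Fin p, IntegrableOn (fun z => ipKer W F G z a b) (Ioi (0 : ℝ) ×ˢ Ioi (0 : ℝ))

/-- The matrix-valued inner product
`⟨F, G⟩ = ∫_{(0,∞)×(0,∞)} (x+y)⁻¹ F(x) W(x) W(y) G(y) dx dy` (entrywise Lebesgue integral). -/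
def ip {p : ℕ} (W F G : ℝ → Mp p) : Mp p :=
  Matrix.of fun a b => ∫ z in Ioi (0 : ℝ) ×ˢ Ioi (0 : ℝ), ipKer W F G z a b

/-- The entrywise integral `∫₀^∞ F(x) dx` of a matrix-valued function. -/
def int1 {p : ℕ} (F : ℝ → Mp p) : Mp p :=
  Matrix.of fun a b => ∫ x in Ioi (0 : ℝ), F x a b

/-- The monomial `x ↦ x^i I`. -/
def monoM (p i : ℕ) : ℝ → Mp p := fun x => x ^ i • (1 : Mp p)

/-- The moments `m_{i,j} = ⟨x^i I, y^j I⟩`. -/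
def momI {p : ℕ} (W : ℝ → Mp p) (i j : ℕ) : Mp p := ip W (monoM p i) (monoM p j)

/-- The block moment matrix `M_n = (m_{i,j})_{0 ≤ i,j ≤ n−1}`, an `np × np` real matrix. -/
def blockMW {p : ℕ} (W : ℝ → Mp p) (n : ℕ) : Matrix (Fin n × Fin p) (Fin n × Fin p) ℝ :=
  Matrix.of fun a b => momI W a.1 b.1 a.2 b.2

/-- The row of moments `(m_{n,0}, …, m_{n,n−1})`, a `p × np` matrix. -/
def rowmW {p : ℕ} (W : ℝ → Mp p) (n : ℕ) : Matrix (Fin p) (Fin n × Fin p) ℝ :=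
  Matrix.of fun a b => momI W n b.1 a b.2

/-- `ξ_{n,i}`, defined by `(ξ_{n,0},…,ξ_{n,n−1}) = −(m_{n,0},…,m_{n,n−1}) M_n⁻¹`. -/
def xiW {p : ℕ} (W : ℝ → Mp p) (n : ℕ) (i : Fin n) : Mp p :=
  Matrix.of fun a b => ((-(rowmW W n)) * (blockMW W n)⁻¹) a (i, b)

/-- The monic matrix-valued Cauchy orthogonal polynomial
`P_n(x) = x^n I + Σ_{i=0}^{n−1} ξ_{n,i} x^i`, evaluated at `x`. -/
def PW {p : ℕ} (W : ℝ → Mp p) (n : ℕ) (x : ℝ) : Mp p :=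
  x ^ n • (1 : Mp p) + ∑ i : Fin n, x ^ (i : ℕ) • xiW W n i

/-- `P_nᵀ(y) = y^n I + Σ_{i=0}^{n−1} y^i ξ_{n,i}ᵀ`, evaluated at `y`. -/
def PTW {p : ℕ} (W : ℝ → Mp p) (n : ℕ) (y : ℝ) : Mp p :=
  y ^ n • (1 : Mp p) + ∑ i : Fin n, y ^ (i : ℕ) • (xiW W n i)ᵀ

/-- Evaluation of a matrix-coefficient polynomial `f ∈ M_p[x]` at a real `x`. -/
def pev {p : ℕ} (f : Polynomial (Mp p)) (x : ℝ) : Mp p :=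
  f.sum fun i a => x ^ i • a

/-- Evaluation at a real `x` of the matrix-coefficient polynomial whose coefficients are
the transposes of the coefficients of `f`. -/
def pevT {p : ℕ} (f : Polynomial (Mp p)) (x : ℝ) : Mp p :=
  f.sum fun i a => x ^ i • aᵀ

/-- The time-deformed moments
`m_{i,j}(t) = ∫_{(0,∞)×(0,∞)} (x+y)⁻¹ x^i y^j e^{t(x+y)} W(x)W(y) dx dy`. -/
def mT {p : ℕ} (W : ℝ → Mp p) (i j : ℕ) (t : ℝ) : Mp p :=
  Matrix.of fun a b => ∫ z in Ioi (0 : ℝ) ×ˢ Ioi (0 : ℝ),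
    ((z.1 + z.2)⁻¹ * z.1 ^ i * z.2 ^ j * Real.exp (t * (z.1 + z.2))) * (W z.1 * W z.2) a b

/-- `φ_i(t) = ∫₀^∞ x^i e^{tx} W(x) dx`. -/
def phiT {p : ℕ} (W : ℝ → Mp p) (i : ℕ) (t : ℝ) : Mp p :=
  Matrix.of fun a b => ∫ x in Ioi (0 : ℝ), (x ^ i * Real.exp (t * x)) * W x a b

theorem hasDerivAt_integral_exp_mul {α : Type*} [MeasurableSpace α] {μ : Measure α}
    {g f bound : α → ℝ} {t ε : ℝ} (hε : 0 < ε)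
    (hint : ∀ s, Integrable (fun z => Real.exp (s * g z) * f z) μ)
    (hmeas : AEStronglyMeasurable (fun z => g z * (Real.exp (t * g z) * f z)) μ)
    (hbound_int : Integrable bound μ)
    (hbound : ∀ᵐ z ∂μ, ∀ s ∈ Metric.ball t ε, |g z * (Real.exp (s * g z) * f z)| ≤ bound z) :
    HasDerivAt (fun s => ∫ z, Real.exp (s * g z) * f z ∂μ)
      (∫ z, g z * (Real.exp (t * g z) * f z) ∂μ) t := by
  refine (hasDerivAt_integral_of_dominated_loc_of_deriv_le (Metric.ball_mem_nhds t hε)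
    (.of_forall fun s => (hint s).aestronglyMeasurable) (hint t) hmeas hbound hbound_int
    (.of_forall fun z s _ => ?_)).2
  exact ((((hasDerivAt_id' s).mul_const (g z)).exp).mul_const (f z)).congr_deriv (by ring)

theorem int1_mul_int1 {p : ℕ} {F G : ℝ → Mp p}
    (hF : ∀ a b, IntegrableOn (fun x => F x a b) (Ioi 0))
    (hG : ∀ a b, IntegrableOn (fun y => G y a b) (Ioi 0)) :
    int1 F * int1 G = Matrix.of fun a b => ∫ z in Ioi (0 : ℝ) ×ˢ Ioi 0, (F z.1 * G z.2) a b := by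
  ext a b
  have hprod : ∀ c, IntegrableOn (fun z : ℝ × ℝ => F z.1 a c * G z.2 c b) (Ioi 0 ×ˢ Ioi 0) := by
    intro c
    rw [IntegrableOn, Measure.volume_eq_prod, ← Measure.prod_restrict]
    exact (hF a c).mul_prod (hG c b)
  simp only [int1, Matrix.mul_apply, Matrix.of_apply]
  rw [integral_finsetSum _ fun c _ => hprod c]
  exact Finset.sum_congr rfl fun c _ => (setIntegral_prod_mul _ _ _ _).symm

theorem phiT_mul_phiT {p : ℕ} {W : ℝ → Mp p} {i j : ℕ} {t : ℝ}
    (hi : ∀ a b, IntegrableOn (fun x => (x ^ i * Real.exp (t * x)) * W x a b) (Ioi 0))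
    (hj : ∀ a b, IntegrableOn (fun x => (x ^ j * Real.exp (t * x)) * W x a b) (Ioi 0)) :
    phiT W i t * phiT W j t = Matrix.of fun a b => ∫ z in Ioi (0 : ℝ) ×ˢ Ioi 0,
      ((z.1 ^ i * Real.exp (t * z.1)) • W z.1 * (z.2 ^ j * Real.exp (t * z.2)) • W z.2) a b :=
  int1_mul_int1 hi hj

def mTKer {p : ℕ} (W : ℝ → Mp p) (i j : ℕ) (a b : Fin p) (t : ℝ) (z : ℝ × ℝ) : ℝ :=
  ((z.1 + z.2)⁻¹ * z.1 ^ i * z.2 ^ j * Real.exp (t * (z.1 + z.2))) * (W z.1 * W z.2) a b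

section mTKer

variable {p : ℕ} (W : ℝ → Mp p) (i j : ℕ) (a b : Fin p) (t : ℝ)

theorem mT_apply : mT W i j t a b = ∫ z in Ioi (0 : ℝ) ×ˢ Ioi 0, mTKer W i j a b t z :=
  rfl

theorem mTKer_eq_exp_mul (z : ℝ × ℝ) :
    mTKer W i j a b t z = Real.exp (t * (z.1 + z.2)) * mTKer W i j a b 0 z := by
  simp only [mTKer, zero_mul, Real.exp_zero]
  ring

theorem mTKer_succ_add_mTKer_succ (z : ℝ × ℝ) :
    mTKer W (i + 1) j a b t z + mTKer W i (j + 1) a b t z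
      = (z.1 + z.2) * mTKer W i j a b t z := by
  simp only [mTKer]
  ring

theorem add_mul_mTKer_eq_mul_apply {z : ℝ × ℝ} (hz : z ∈ Ioi (0 : ℝ) ×ˢ Ioi 0) :
    (z.1 + z.2) * mTKer W i j a b t z
      = ((z.1 ^ i * Real.exp (t * z.1)) • W z.1 * (z.2 ^ j * Real.exp (t * z.2)) • W z.2) a b := by
  have hxy : z.1 + z.2 ≠ 0 := (add_pos hz.1 hz.2).ne'
  rw [smul_mul_smul_comm, Matrix.smul_apply, smul_eq_mul, mTKer, mul_add t, Real.exp_add]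
  field_simp

theorem mT_succ_add_mT_succ_apply
    (h₁ : IntegrableOn (mTKer W (i + 1) j a b t) (Ioi 0 ×ˢ Ioi 0))
    (h₂ : IntegrableOn (mTKer W i (j + 1) a b t) (Ioi 0 ×ˢ Ioi 0)) :
    (mT W (i + 1) j t + mT W i (j + 1) t) a b
      = ∫ z in Ioi (0 : ℝ) ×ˢ Ioi 0, (z.1 + z.2) * mTKer W i j a b t z := by
  rw [Matrix.add_apply, mT_apply, mT_apply, ← integral_add h₁ h₂]
  simp only [mTKer_succ_add_mTKer_succ]

theorem hasDerivAt_mT_apply {ε : ℝ} (hε : 0 < ε) {bound : ℝ × ℝ → ℝ}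
    (hint : ∀ s, IntegrableOn (mTKer W i j a b s) (Ioi 0 ×ˢ Ioi 0))
    (h₁ : IntegrableOn (mTKer W (i + 1) j a b t) (Ioi 0 ×ˢ Ioi 0))
    (h₂ : IntegrableOn (mTKer W i (j + 1) a b t) (Ioi 0 ×ˢ Ioi 0))
    (hbound_int : IntegrableOn bound (Ioi 0 ×ˢ Ioi 0))
    (hbound : ∀ s ∈ Metric.ball t ε, ∀ z ∈ Ioi (0 : ℝ) ×ˢ Ioi 0,
      |mTKer W (i + 1) j a b s z| ≤ bound z ∧ |mTKer W i (j + 1) a b s z| ≤ bound z) :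
    HasDerivAt (fun s => mT W i j s a b)
      (∫ z in Ioi (0 : ℝ) ×ˢ Ioi 0, (z.1 + z.2) * mTKer W i j a b t z) t := by
  have hsplit (s z) : (z.1 + z.2) * (Real.exp (s * (z.1 + z.2)) * mTKer W i j a b 0 z)
      = mTKer W (i + 1) j a b s z + mTKer W i (j + 1) a b s z := by
    rw [mTKer_succ_add_mTKer_succ, mTKer_eq_exp_mul W i j a b s]
  have hF : (fun s => mT W i j s a b)
      = fun s => ∫ z in Ioi (0 : ℝ) ×ˢ Ioi 0, Real.exp (s * (z.1 + z.2)) * mTKer W i j a b 0 z :=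
    funext fun s => integral_congr_ae (ae_of_all _ (mTKer_eq_exp_mul W i j a b s))
  rw [hF]
  simp only [mTKer_eq_exp_mul W i j a b t]
  refine hasDerivAt_integral_exp_mul hε
    (fun s => (hint s).congr_fun (fun z _ => mTKer_eq_exp_mul W i j a b s z)
      (measurableSet_Ioi.prod measurableSet_Ioi))
    (((h₁.add h₂).aestronglyMeasurable).congr (ae_of_all _ fun z => (hsplit t z).symm))
    (hbound_int.const_mul 2) ?_
  filter_upwards [ae_restrict_mem (measurableSet_Ioi.prod measurableSet_Ioi)] with z hz s hs
  obtain ⟨hb₁, hb₂⟩ := hbound s hs z hz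
  rw [hsplit]
  linarith [abs_add_le (mTKer W (i + 1) j a b s z) (mTKer W i (j + 1) a b s z)]

end mTKer

theorem stmt2_general {p : ℕ} (W : ℝ → Mp p)
    (i j : ℕ)
    (hdom : ∀ c d : ℝ, ∃ bound : ℝ × ℝ → ℝ,
      IntegrableOn bound (Ioi (0 : ℝ) ×ˢ Ioi (0 : ℝ)) ∧
      ∀ t ∈ Icc c d, ∀ z ∈ Ioi (0 : ℝ) ×ˢ Ioi (0 : ℝ), ∀ a b : Fin p,
        |((z.1 + z.2)⁻¹ * z.1 ^ (i + 1) * z.2 ^ j * Real.exp (t * (z.1 + z.2)))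
            * (W z.1 * W z.2) a b| ≤ bound z ∧
        |((z.1 + z.2)⁻¹ * z.1 ^ i * z.2 ^ (j + 1) * Real.exp (t * (z.1 + z.2)))
            * (W z.1 * W z.2) a b| ≤ bound z)
    (hmfin : ∀ (k l : ℕ) (t : ℝ) (a b : Fin p),
      IntegrableOn (fun z : ℝ × ℝ =>
          ((z.1 + z.2)⁻¹ * z.1 ^ k * z.2 ^ l * Real.exp (t * (z.1 + z.2)))
            * (W z.1 * W z.2) a b)
        (Ioi (0 : ℝ) ×ˢ Ioi (0 : ℝ)))
    (hphifin : ∀ (k : ℕ) (t : ℝ) (a b : Fin p),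
      IntegrableOn (fun x => (x ^ k * Real.exp (t * x)) * W x a b) (Ioi (0 : ℝ))) :
    ∀ t : ℝ,
      (∀ a b : Fin p,
        HasDerivAt (fun s => mT W i j s a b) ((mT W (i + 1) j t + mT W i (j + 1) t) a b) t) ∧
      mT W (i + 1) j t + mT W i (j + 1) t = phiT W i t * phiT W j t := by
  intro t
  have hsum := fun a b => mT_succ_add_mT_succ_apply W i j a b t (hmfin _ _ t a b) (hmfin _ _ t a b)
  refine ⟨fun a b => ?_, ?_⟩
  · obtain ⟨bound, hbound_int, hbound⟩ := hdom (t - 1) (t + 1)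
    rw [hsum]
    refine hasDerivAt_mT_apply W i j a b t one_pos (fun s => hmfin i j s a b) (hmfin _ _ t a b)
      (hmfin _ _ t a b) hbound_int fun s hs z hz =>
        hbound s (Real.closedBall_eq_Icc ▸ Metric.ball_subset_closedBall hs) z hz a b
  · ext a b
    rw [phiT_mul_phiT (hphifin i t) (hphifin j t), Matrix.of_apply,
      hsum, setIntegral_congr_fun (measurableSet_Ioi.prod measurableSet_Ioi)
        fun z hz => add_mul_mTKer_eq_mul_apply W i j a b t hz]

/-- Fix `i, j ≥ 0`.  Assume that for every compact interval `[c,d] ⊂ ℝ` there is an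
integrable function on `(0,∞)×(0,∞)` dominating, uniformly for `t ∈ [c,d]`, the entrywise
norms of `(x+y)⁻¹ x^{i+1} y^j e^{t(x+y)} W(x)W(y)` and `(x+y)⁻¹ x^i y^{j+1} e^{t(x+y)} W(x)W(y)`,
and that all `m_{k,l}(t)` and `φ_k(t)` are finite.  Then `t ↦ m_{i,j}(t)` is differentiable
on `ℝ` and `∂_t m_{i,j}(t) = m_{i+1,j}(t) + m_{i,j+1}(t) = φ_i(t) φ_j(t)`. -/
theorem stmt2 {p : ℕ} (hp : 1 ≤ p) (W : ℝ → Mp p)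
    (hWmeas : ∀ a b, Measurable fun x => W x a b)
    (hWsupp : ∀ x : ℝ, x ∉ Ioi (0 : ℝ) → W x = 0)
    (hWsym : ∀ x, (W x)ᵀ = W x)
    (i j : ℕ)
    (hdom : ∀ c d : ℝ, ∃ bound : ℝ × ℝ → ℝ,
      IntegrableOn bound (Ioi (0 : ℝ) ×ˢ Ioi (0 : ℝ)) ∧
      ∀ t ∈ Icc c d, ∀ z ∈ Ioi (0 : ℝ) ×ˢ Ioi (0 : ℝ), ∀ a b : Fin p,
        |((z.1 + z.2)⁻¹ * z.1 ^ (i + 1) * z.2 ^ j * Real.exp (t * (z.1 + z.2)))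
            * (W z.1 * W z.2) a b| ≤ bound z ∧
        |((z.1 + z.2)⁻¹ * z.1 ^ i * z.2 ^ (j + 1) * Real.exp (t * (z.1 + z.2)))
            * (W z.1 * W z.2) a b| ≤ bound z)
    (hmfin : ∀ (k l : ℕ) (t : ℝ) (a b : Fin p),
      IntegrableOn (fun z : ℝ × ℝ =>
          ((z.1 + z.2)⁻¹ * z.1 ^ k * z.2 ^ l * Real.exp (t * (z.1 + z.2)))
            * (W z.1 * W z.2) a b)
        (Ioi (0 : ℝ) ×ˢ Ioi (0 : ℝ)))
    (hphifin : ∀ (k : ℕ) (t : ℝ) (a b : Fin p),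
      IntegrableOn (fun x => (x ^ k * Real.exp (t * x)) * W x a b) (Ioi (0 : ℝ))) :
    ∀ t : ℝ,
      (∀ a b : Fin p,
        HasDerivAt (fun s => mT W i j s a b) ((mT W (i + 1) j t + mT W i (j + 1) t) a b) t) ∧
      mT W (i + 1) j t + mT W i (j + 1) t = phiT W i t * phiT W j t :=
  stmt2_general W i j hdom hmfin hphifin
end
end

section
/- Assume all moments m_{i,j} are finite and each block moment matrix M_n is invertible. Then the matrix-valued Cauchy orthogonal polynomials satisfy ⟨P_n(x), P_m^T(y)⟩ = δ_{n,m} H_n for all n, m ≥ 0, where P_m^T(y) = y^m I + Σ_{j=0}^{m−1} y^j ξ_{m,j}^T and H_n = m_{n,n} + Σ_{i=0}^{n−1} ξ_{n,i} m_{i,n}; moreover H_n is symmetric, H_n^T = H_n. -/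
open Matrix MeasureTheory Set

noncomputable section

/-- `H_n = m_{n,n} + Σ_{i=0}^{n−1} ξ_{n,i} m_{i,n}`. -/
def HW {p : ℕ} (W : ℝ → Mp p) (n : ℕ) : Mp p :=
  momI W n n + ∑ i : Fin n, xiW W n i * momI W i n

namespace Stmt4Aux

variable {p : ℕ} (W : ℝ → Mp p)

lemma ipKer_mono_apply (i j : ℕ) (z : ℝ × ℝ) (c d : Fin p) :
    ipKer W (monoM p i) (monoM p j) z c d
      = (z.1 + z.2)⁻¹ * (z.1 ^ i * z.2 ^ j * (W z.1 * W z.2) c d) := by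
  simp only [ipKer, monoM, Matrix.smul_mul, Matrix.mul_smul, Matrix.smul_apply, smul_smul,
    smul_eq_mul, Matrix.one_mul]
  ring

lemma momI_apply (i j : ℕ) (c d : Fin p) :
    momI W i j c d = ∫ z in Ioi (0:ℝ) ×ˢ Ioi (0:ℝ),
      (z.1 + z.2)⁻¹ * (z.1 ^ i * z.2 ^ j * (W z.1 * W z.2) c d) := by
  simp only [momI, ip, Matrix.of_apply, ipKer_mono_apply]

lemma integral_swap_Ioi (f : ℝ × ℝ → ℝ) :
    ∫ z in Ioi (0:ℝ) ×ˢ Ioi (0:ℝ), f z.swap = ∫ z in Ioi (0:ℝ) ×ˢ Ioi (0:ℝ), f z := by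
  rw [show (volume : Measure (ℝ × ℝ)).restrict (Ioi (0:ℝ) ×ˢ Ioi (0:ℝ))
        = (volume.restrict (Ioi (0:ℝ))).prod (volume.restrict (Ioi (0:ℝ))) by
      rw [Measure.prod_restrict, ← Measure.volume_eq_prod]]
  exact integral_prod_swap f

lemma momI_symm (hWsym : ∀ x, (W x)ᵀ = W x) (i j : ℕ) :
    (momI W i j)ᵀ = momI W j i := by
  ext a b
  rw [Matrix.transpose_apply, momI_apply, momI_apply, ← integral_swap_Ioi
      (fun z => (z.1 + z.2)⁻¹ * (z.1 ^ i * z.2 ^ j * (W z.1 * W z.2) b a))]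
  refine integral_congr_ae (Filter.Eventually.of_forall fun z => ?_)
  have hW : (W z.2 * W z.1) b a = (W z.1 * W z.2) a b := by
    rw [← Matrix.transpose_apply (W z.2 * W z.1), Matrix.transpose_mul, hWsym, hWsym]
  simp only [Prod.fst_swap, Prod.snd_swap]
  rw [hW, add_comm z.2 z.1]
  ring


lemma ip_sum (hfin : ∀ i j, IpInt W (monoM p i) (monoM p j))
    (N M : ℕ) (C D : ℕ → Mp p) :
    ip W (fun x => ∑ i ∈ Finset.range N, x ^ i • C i)
         (fun y => ∑ j ∈ Finset.range M, y ^ j • D j)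
      = ∑ i ∈ Finset.range N, ∑ j ∈ Finset.range M, C i * momI W i j * D j := by
  have hmat : ∀ z : ℝ × ℝ,
      (∑ i ∈ Finset.range N, z.1 ^ i • C i) * W z.1 * W z.2
          * (∑ j ∈ Finset.range M, z.2 ^ j • D j)
        = ∑ i ∈ Finset.range N, ∑ j ∈ Finset.range M,
            (z.1 ^ i * z.2 ^ j) • (C i * (W z.1 * W z.2) * D j) := by
    intro z
    simp only [Finset.sum_mul, Finset.mul_sum, Matrix.smul_mul, Matrix.mul_smul, smul_smul,
      Matrix.mul_assoc]
    rw [Finset.sum_comm]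
    exact Finset.sum_congr rfl fun i _ => Finset.sum_congr rfl fun j _ => by rw [mul_comm]
  ext a b
  have hker : ∀ z : ℝ × ℝ,
      ipKer W (fun x => ∑ i ∈ Finset.range N, x ^ i • C i)
        (fun y => ∑ j ∈ Finset.range M, y ^ j • D j) z a b
      = ∑ i ∈ Finset.range N, ∑ j ∈ Finset.range M, ∑ c, ∑ d,
          C i a c * D j d b * ipKer W (monoM p i) (monoM p j) z c d := by
    intro z
    simp only [ipKer_mono_apply]
    show ((z.1 + z.2)⁻¹ • ((∑ i ∈ Finset.range N, z.1 ^ i • C i) * W z.1 * W z.2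
          * (∑ j ∈ Finset.range M, z.2 ^ j • D j))) a b = _
    rw [hmat z]
    simp only [Matrix.smul_apply, Matrix.sum_apply, Finset.smul_sum, smul_smul, smul_eq_mul,
      Finset.mul_sum]
    refine Finset.sum_congr rfl fun i _ => Finset.sum_congr rfl fun j _ => ?_
    simp only [Matrix.mul_apply, Finset.mul_sum, Finset.sum_mul]
    rw [Finset.sum_comm]
    refine Finset.sum_congr rfl fun c _ => Finset.sum_congr rfl fun d _ =>
      Finset.sum_congr rfl fun e _ => by ring
  have hInt : ∀ (i j : ℕ) (c d : Fin p) (r : ℝ),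
      Integrable (fun z => r * ipKer W (monoM p i) (monoM p j) z c d)
        (volume.restrict (Ioi (0:ℝ) ×ˢ Ioi (0:ℝ))) := fun i j c d r =>
    (hfin i j c d).const_mul r
  show (∫ z in Ioi (0:ℝ) ×ˢ Ioi (0:ℝ), ipKer W _ _ z a b) = _
  calc (∫ z in Ioi (0:ℝ) ×ˢ Ioi (0:ℝ), ipKer W
          (fun x => ∑ i ∈ Finset.range N, x ^ i • C i)
          (fun y => ∑ j ∈ Finset.range M, y ^ j • D j) z a b)
      = ∫ z in Ioi (0:ℝ) ×ˢ Ioi (0:ℝ), ∑ i ∈ Finset.range N, ∑ j ∈ Finset.range M,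
          ∑ c, ∑ d, C i a c * D j d b * ipKer W (monoM p i) (monoM p j) z c d :=
        integral_congr_ae (Filter.Eventually.of_forall fun z => hker z)
    _ = ∑ i ∈ Finset.range N, ∑ j ∈ Finset.range M, ∑ c, ∑ d,
          C i a c * D j d b * momI W i j c d := by
        rw [integral_finset_sum _ fun i _ => integrable_finset_sum _ fun j _ =>
          integrable_finset_sum _ fun c _ => integrable_finset_sum _ fun d _ => hInt _ _ _ _ _]
        refine Finset.sum_congr rfl fun i _ => ?_
        rw [integral_finset_sum _ fun j _ => integrable_finset_sum _ fun c _ =>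
          integrable_finset_sum _ fun d _ => hInt _ _ _ _ _]
        refine Finset.sum_congr rfl fun j _ => ?_
        rw [integral_finset_sum _ fun c _ => integrable_finset_sum _ fun d _ => hInt _ _ _ _ _]
        refine Finset.sum_congr rfl fun c _ => ?_
        rw [integral_finset_sum _ fun d _ => hInt _ _ _ _ _]
        refine Finset.sum_congr rfl fun d _ => ?_
        rw [MeasureTheory.integral_const_mul]
        rfl
    _ = (∑ i ∈ Finset.range N, ∑ j ∈ Finset.range M, C i * momI W i j * D j) a b := by
        simp only [Finset.sum_apply, Matrix.sum_apply, Matrix.mul_apply, Finset.sum_mul]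
        refine Finset.sum_congr rfl fun i _ => Finset.sum_congr rfl fun j _ => ?_
        rw [Finset.sum_comm]
        exact Finset.sum_congr rfl fun c _ => Finset.sum_congr rfl fun d _ => by ring

end Stmt4Aux

namespace Stmt4Aux

def coefC {p : ℕ} (W : ℝ → Mp p) (n i : ℕ) : Mp p :=
  if h : i < n then xiW W n ⟨i, h⟩ else 1

def coefD {p : ℕ} (W : ℝ → Mp p) (n i : ℕ) : Mp p :=
  if h : i < n then (xiW W n ⟨i, h⟩)ᵀ else 1

variable {p : ℕ} (W : ℝ → Mp p)

lemma coefC_transpose (n i : ℕ) : (coefC W n i)ᵀ = coefD W n i := by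
  unfold coefC coefD; split_ifs <;> simp

lemma coefD_transpose (n i : ℕ) : (coefD W n i)ᵀ = coefC W n i := by
  unfold coefC coefD; split_ifs <;> simp

lemma PW_eq (n : ℕ) (x : ℝ) :
    PW W n x = ∑ i ∈ Finset.range (n + 1), x ^ i • coefC W n i := by
  rw [Finset.sum_range_succ, coefC, dif_neg (lt_irrefl n), PW, add_comm]
  congr 1
  have h : ∀ i : Fin n, x ^ (i : ℕ) • xiW W n i = x ^ (i : ℕ) • coefC W n (i : ℕ) := fun i => by
    rw [coefC, dif_pos i.isLt, Fin.eta]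
  simp only [h]
  exact Fin.sum_univ_eq_sum_range (fun i => x ^ i • coefC W n i) n

lemma PTW_eq (n : ℕ) (x : ℝ) :
    PTW W n x = ∑ i ∈ Finset.range (n + 1), x ^ i • coefD W n i := by
  rw [Finset.sum_range_succ, coefD, dif_neg (lt_irrefl n), PTW, add_comm]
  congr 1
  have h : ∀ i : Fin n, x ^ (i : ℕ) • (xiW W n i)ᵀ = x ^ (i : ℕ) • coefD W n (i : ℕ) := fun i => by
    rw [coefD, dif_pos i.isLt, Fin.eta]
  simp only [h]
  exact Fin.sum_univ_eq_sum_range (fun i => x ^ i • coefD W n i) n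

lemma xi_rel (n : ℕ) (hM : IsUnit (blockMW W n)) (j : Fin n) :
    momI W n j + ∑ i : Fin n, xiW W n i * momI W i j = 0 := by
  have hd : IsUnit (blockMW W n).det := (Matrix.isUnit_iff_isUnit_det _).mp hM
  have h1 : (-(rowmW W n)) * (blockMW W n)⁻¹ * blockMW W n = -(rowmW W n) :=
    Matrix.nonsing_inv_mul_cancel_right _ _ hd
  ext a b
  have h2 : ((-(rowmW W n)) * (blockMW W n)⁻¹ * blockMW W n) a (j, b)
      = (-(rowmW W n)) a (j, b) := by rw [h1]
  rw [Matrix.mul_apply, Fintype.sum_prod_type] at h2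
  have hx : ∀ (x : Fin n) (c : Fin p),
      ((-(rowmW W n)) * (blockMW W n)⁻¹) a (x, c) = xiW W n x a c := fun _ _ => rfl
  have hb : ∀ (x : Fin n) (c : Fin p),
      blockMW W n (x, c) (j, b) = momI W x j c b := fun _ _ => rfl
  have hr : (-(rowmW W n)) a (j, b) = -(momI W n j a b) := rfl
  simp only [hx, hb, hr] at h2
  simp only [Matrix.add_apply, Matrix.sum_apply, Matrix.mul_apply, Matrix.zero_apply]
  linarith [h2]

def Ssum {p : ℕ} (W : ℝ → Mp p) (n m : ℕ) : Mp p :=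
  ∑ i ∈ Finset.range (n + 1), ∑ j ∈ Finset.range (m + 1), coefC W n i * momI W i j * coefD W m j

lemma Ssum_factor (n m : ℕ) :
    Ssum W n m = ∑ j ∈ Finset.range (m + 1),
      (∑ i ∈ Finset.range (n + 1), coefC W n i * momI W i j) * coefD W m j := by
  rw [Ssum, Finset.sum_comm]
  exact Finset.sum_congr rfl fun j _ => (Finset.sum_mul _ _ _).symm

lemma inner_sum (n j : ℕ) : ∑ i ∈ Finset.range (n + 1), coefC W n i * momI W i j
    = momI W n j + ∑ i : Fin n, xiW W n i * momI W i j := by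
  rw [Finset.sum_range_succ, coefC, dif_neg (lt_irrefl n), one_mul, add_comm]
  congr 1
  rw [← Fin.sum_univ_eq_sum_range (fun i => coefC W n i * momI W i j) n]
  exact Finset.sum_congr rfl fun i _ => by rw [coefC, dif_pos i.isLt, Fin.eta]

lemma inner_zero (n : ℕ) (hM : IsUnit (blockMW W n)) {j : ℕ} (hj : j < n) :
    ∑ i ∈ Finset.range (n + 1), coefC W n i * momI W i j = 0 := by
  rw [inner_sum]
  exact xi_rel W n hM ⟨j, hj⟩

lemma Ssum_lt (n m : ℕ) (hM : IsUnit (blockMW W n)) (h : m < n) : Ssum W n m = 0 := by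
  rw [Ssum_factor]
  refine Finset.sum_eq_zero fun j hj => ?_
  rw [inner_zero W n hM (lt_of_lt_of_le (Finset.mem_range.mp hj) h), Matrix.zero_mul]

lemma Ssum_diag (n : ℕ) (hM : IsUnit (blockMW W n)) : Ssum W n n = HW W n := by
  rw [Ssum_factor, Finset.sum_range_succ, Finset.sum_eq_zero (fun j hj => by
    rw [inner_zero W n hM (Finset.mem_range.mp hj), Matrix.zero_mul]), zero_add,
    coefD, dif_neg (lt_irrefl n), Matrix.mul_one, inner_sum, HW]

lemma Ssum_transpose (hWsym : ∀ x, (W x)ᵀ = W x) (n m : ℕ) :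
    (Ssum W n m)ᵀ = Ssum W m n := by
  simp only [Ssum, Matrix.transpose_sum, Matrix.transpose_mul, Matrix.mul_assoc,
    momI_symm W hWsym, coefC_transpose, coefD_transpose]
  rw [Finset.sum_comm]

end Stmt4Aux

/-- Assume all moments are finite and each block moment matrix is invertible.  Then the
matrix-valued Cauchy orthogonal polynomials satisfy `⟨P_n(x), P_mᵀ(y)⟩ = δ_{n,m} H_n` for
all `n, m ≥ 0`, where `H_n = m_{n,n} + Σ_{i=0}^{n−1} ξ_{n,i} m_{i,n}`; moreover `H_nᵀ = H_n`. -/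
theorem stmt4 {p : ℕ} (hp : 1 ≤ p) (W : ℝ → Mp p)
    (hWmeas : ∀ a b, Measurable fun x => W x a b)
    (hWsupp : ∀ x : ℝ, x ∉ Ioi (0 : ℝ) → W x = 0)
    (hWsym : ∀ x, (W x)ᵀ = W x)
    (hfin : ∀ i j, IpInt W (monoM p i) (monoM p j))
    (hM : ∀ k, IsUnit (blockMW W k)) :
    (∀ n m : ℕ, ip W (PW W n) (PTW W m) = if n = m then HW W n else 0) ∧
    ∀ n : ℕ, (HW W n)ᵀ = HW W n := by
  have hS : ∀ n m : ℕ, ip W (PW W n) (PTW W m) = Stmt4Aux.Ssum W n m := by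
    intro n m
    have h1 : PW W n = fun x => ∑ i ∈ Finset.range (n + 1), x ^ i • Stmt4Aux.coefC W n i :=
      funext fun x => Stmt4Aux.PW_eq W n x
    have h2 : PTW W m = fun y => ∑ j ∈ Finset.range (m + 1), y ^ j • Stmt4Aux.coefD W m j :=
      funext fun y => Stmt4Aux.PTW_eq W m y
    rw [h1, h2, Stmt4Aux.ip_sum W hfin]
    rfl
  constructor
  · intro n m
    rw [hS n m]
    rcases lt_trichotomy n m with h | h | h
    · rw [if_neg h.ne]
      calc Stmt4Aux.Ssum W n m = ((Stmt4Aux.Ssum W n m)ᵀ)ᵀ := (Matrix.transpose_transpose _).symm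
        _ = 0 := by
            rw [Stmt4Aux.Ssum_transpose W hWsym n m, Stmt4Aux.Ssum_lt W m n (hM m) h,
              Matrix.transpose_zero]
    · subst h
      rw [if_pos rfl]
      exact Stmt4Aux.Ssum_diag W n (hM n)
    · rw [if_neg (Ne.symm h.ne)]
      exact Stmt4Aux.Ssum_lt W n m (hM n) h
  · intro n
    calc (HW W n)ᵀ = (Stmt4Aux.Ssum W n n)ᵀ := by rw [Stmt4Aux.Ssum_diag W n (hM n)]
      _ = Stmt4Aux.Ssum W n n := Stmt4Aux.Ssum_transpose W hWsym n n
      _ = HW W n := Stmt4Aux.Ssum_diag W n (hM n)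
end
end

section
/- Fix n ≥ 0 and set V_k = ∫₀^∞ P_k(x)W(x) dx (assumed finite); suppose V_n and V_{n+1} are invertible and set a_n = −V_{n+1} V_n^{-1}. Then V_{n+1} + a_n V_n = 0, and for every matrix polynomial g ∈ M_p[y] for which the relevant integrands are Bochner integrable, ⟨x·(P_{n+1}(x) + a_n P_n(x)), g(y)⟩ = −⟨P_{n+1}(x) + a_n P_n(x), y·g(y)⟩. -/
open Matrix MeasureTheory Set

noncomputable section

/-- `V_k = ∫₀^∞ P_k(x) W(x) dx`. -/
def VW {p : ℕ} (W : ℝ → Mp p) (k : ℕ) : Mp p := int1 (fun x => PW W k x * W x)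

lemma aux_prod_int {f h : ℝ → ℝ} (hf : IntegrableOn f (Ioi (0:ℝ)))
    (hh : IntegrableOn h (Ioi (0:ℝ))) :
    IntegrableOn (fun z : ℝ × ℝ => f z.1 * h z.2) (Ioi (0:ℝ) ×ˢ Ioi (0:ℝ)) := by
  rw [IntegrableOn, Measure.volume_eq_prod, ← Measure.prod_restrict]
  exact hf.mul_prod hh

lemma aux_prod_eq (f h : ℝ → ℝ) :
    ∫ z in Ioi (0:ℝ) ×ˢ Ioi (0:ℝ), f z.1 * h z.2
      = (∫ x in Ioi (0:ℝ), f x) * ∫ y in Ioi (0:ℝ), h y := by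
  rw [Measure.volume_eq_prod, setIntegral_prod_mul]

/-- Fix `n ≥ 0`, set `V_k = ∫₀^∞ P_k(x)W(x) dx` (assumed finite), suppose `V_n` and
`V_{n+1}` are invertible and set `a_n = −V_{n+1} V_n⁻¹`.  Then `V_{n+1} + a_n V_n = 0`,
and for every matrix polynomial `g ∈ M_p[y]` whose relevant integrands are integrable,
`⟨x (P_{n+1}(x) + a_n P_n(x)), g(y)⟩ = −⟨P_{n+1}(x) + a_n P_n(x), y g(y)⟩`. -/
theorem stmt6 {p : ℕ} (hp : 1 ≤ p) (W : ℝ → Mp p)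
    (hWmeas : ∀ a b, Measurable fun x => W x a b)
    (hWsupp : ∀ x : ℝ, x ∉ Ioi (0 : ℝ) → W x = 0)
    (hWsym : ∀ x, (W x)ᵀ = W x)
    (hfin : ∀ i j, IpInt W (monoM p i) (monoM p j))
    (hM : ∀ k, IsUnit (blockMW W k))
    (n : ℕ)
    (hVfin : ∀ k, k = n ∨ k = n + 1 →
      ∀ a b, IntegrableOn (fun x => (PW W k x * W x) a b) (Ioi (0 : ℝ)))
    (hVn : IsUnit (VW W n)) (hVn1 : IsUnit (VW W (n + 1))) :
    VW W (n + 1) + (-(VW W (n + 1) * (VW W n)⁻¹)) * VW W n = 0 ∧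
    ∀ g : Polynomial (Mp p),
      IpInt W (fun x => x • (PW W (n + 1) x + (-(VW W (n + 1) * (VW W n)⁻¹)) * PW W n x))
        (pev g) →
      IpInt W (fun x => PW W (n + 1) x + (-(VW W (n + 1) * (VW W n)⁻¹)) * PW W n x)
        (fun y => y • pev g y) →
      (∀ a b, IntegrableOn (fun y => (W y * pev g y) a b) (Ioi (0 : ℝ))) →
      ip W (fun x => x • (PW W (n + 1) x + (-(VW W (n + 1) * (VW W n)⁻¹)) * PW W n x))
          (pev g)
        = -ip W (fun x => PW W (n + 1) x + (-(VW W (n + 1) * (VW W n)⁻¹)) * PW W n x)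
            (fun y => y • pev g y) := by
  set a : Mp p := -(VW W (n + 1) * (VW W n)⁻¹) with ha
  have h1 : VW W (n + 1) + a * VW W n = 0 := by
    rw [ha, neg_mul, Matrix.mul_assoc,
      Matrix.nonsing_inv_mul _ ((Matrix.isUnit_iff_isUnit_det _).mp hVn),
      Matrix.mul_one, add_neg_cancel]
  refine ⟨h1, ?_⟩
  intro g hI1 hI2 hg
  set Q : ℝ → Mp p := fun x => PW W (n + 1) x + a * PW W n x with hQ
  have hexp : ∀ (c d : Fin p) (x : ℝ), (Q x * W x) c d
      = (PW W (n + 1) x * W x) c d + ∑ e, a c e * (PW W n x * W x) e d := by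
    intro c d x
    rw [hQ, Matrix.add_mul, Matrix.add_apply, Matrix.mul_assoc]
    exact congrArg _ Matrix.mul_apply
  have hQint : ∀ c d : Fin p,
      IntegrableOn (fun x => (Q x * W x) c d) (Ioi (0:ℝ)) := by
    intro c d
    simp only [hexp]
    exact (hVfin (n + 1) (Or.inr rfl) c d).add
      (integrable_finset_sum _ fun e _ => ((hVfin n (Or.inl rfl) e d).const_mul _))
  have hQzero : ∀ c d : Fin p, ∫ x in Ioi (0:ℝ), (Q x * W x) c d = 0 := by
    intro c d
    simp only [hexp]
    rw [integral_add (hVfin (n + 1) (Or.inr rfl) c d)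
        (integrable_finset_sum _ fun e _ => ((hVfin n (Or.inl rfl) e d).const_mul _)),
      integral_finset_sum _ fun e _ => ((hVfin n (Or.inl rfl) e d).const_mul _)]
    simp only [integral_const_mul]
    have h2 := congrFun (congrFun h1 c) d
    simpa [VW, int1, Matrix.add_apply, Matrix.mul_apply] using h2
  ext c d
  have key : (∫ z in Ioi (0:ℝ) ×ˢ Ioi (0:ℝ), ipKer W (fun x => x • Q x) (pev g) z c d)
      + (∫ z in Ioi (0:ℝ) ×ˢ Ioi (0:ℝ), ipKer W Q (fun y => y • pev g y) z c d) = 0 := by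
    rw [← integral_add (hI1 c d) (hI2 c d)]
    have heq : ∀ z ∈ Ioi (0:ℝ) ×ˢ Ioi (0:ℝ),
        ipKer W (fun x => x • Q x) (pev g) z c d + ipKer W Q (fun y => y • pev g y) z c d
        = ∑ e, (Q z.1 * W z.1) c e * (W z.2 * pev g z.2) e d := by
      intro z hz
      have hz1 : (0:ℝ) < z.1 := hz.1
      have hz2 : (0:ℝ) < z.2 := hz.2
      have hne : z.1 + z.2 ≠ 0 := (add_pos hz1 hz2).ne'
      have hm : (Q z.1 * W z.1 * W z.2 * pev g z.2) c d
          = ∑ e, (Q z.1 * W z.1) c e * (W z.2 * pev g z.2) e d := by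
        rw [Matrix.mul_assoc]; exact Matrix.mul_apply
      simp only [ipKer, Matrix.smul_mul, Matrix.mul_smul, smul_smul, Matrix.smul_apply,
        smul_eq_mul]
      rw [← hm]
      field_simp
    rw [setIntegral_congr_fun (measurableSet_Ioi.prod measurableSet_Ioi) heq,
      integral_finset_sum _ fun e _ => aux_prod_int (hQint c e) (hg e d)]
    refine Finset.sum_eq_zero fun e _ => ?_
    exact (aux_prod_eq (fun x => (Q x * W x) c e) (fun y => (W y * pev g y) e d)).trans
      (by rw [hQzero, zero_mul])
  simp only [ip, Matrix.neg_apply, Matrix.of_apply]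
  linarith [key]
end
end

section
/- Fix n ≥ 1 and assume additionally that H_{n−1}, H_n, H_{n+1}, V_n and V_{n+1} are invertible. Set b_n = −ξ_{n+2,n+1} + ξ_{n+1,n} + a_n, c_n = −H_{n+1} H_n^{-1} + a_n H_n (ξ_{n+1,n}^T − ξ_{n,n−1}^T) H_n^{-1}, and d_n = −a_n H_n H_{n−1}^{-1}. Then the four-term recurrence relation holds as an identity of matrix polynomials: x·(P_{n+1}(x) + a_n P_n(x)) = P_{n+2}(x) + b_n P_{n+1}(x) + c_n P_n(x) + d_n P_{n−1}(x). -/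
open Matrix
open Finset

noncomputable section

/-- The block moment matrix `M_n = (m_{i,j})_{0 ≤ i,j ≤ n−1}`, an `np × np` real matrix. -/
def blockM {p : ℕ} (m : ℕ → ℕ → Mp p) (n : ℕ) : Matrix (Fin n × Fin p) (Fin n × Fin p) ℝ :=
  Matrix.of fun a b => m a.1 b.1 a.2 b.2

/-- The row of moments `(m_{n,0}, …, m_{n,n−1})`, a `p × np` matrix. -/
def rowm {p : ℕ} (m : ℕ → ℕ → Mp p) (n : ℕ) : Matrix (Fin p) (Fin n × Fin p) ℝ :=
  Matrix.of fun a b => m n b.1 a b.2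

/-- `ξ_{n,i}`, defined by `(ξ_{n,0},…,ξ_{n,n−1}) = −(m_{n,0},…,m_{n,n−1}) M_n⁻¹`. -/
def xiD {p : ℕ} (m : ℕ → ℕ → Mp p) (n : ℕ) (i : Fin n) : Mp p :=
  Matrix.of fun a b => ((-(rowm m n)) * (blockM m n)⁻¹) a (i, b)

/-- The monic matrix polynomial `P_n(x) = x^n I + Σ_{i=0}^{n−1} ξ_{n,i} x^i`, evaluated at `x`. -/
def Pev {p : ℕ} (m : ℕ → ℕ → Mp p) (n : ℕ) (x : ℝ) : Mp p :=
  x ^ n • (1 : Mp p) + ∑ i : Fin n, x ^ (i : ℕ) • xiD m n i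

/-- `H_n = m_{n,n} + Σ_{i=0}^{n−1} ξ_{n,i} m_{i,n}`. -/
def HmatD {p : ℕ} (m : ℕ → ℕ → Mp p) (n : ℕ) : Mp p :=
  m n n + ∑ i : Fin n, xiD m n i * m i n

/-- `V_n = φ_n + Σ_{i=0}^{n−1} ξ_{n,i} φ_i`. -/
def VD {p : ℕ} (m : ℕ → ℕ → Mp p) (φ : ℕ → Mp p) (n : ℕ) : Mp p :=
  φ n + ∑ i : Fin n, xiD m n i * φ i

/-- `a_n = −V_{n+1} V_n⁻¹`. -/
def aD {p : ℕ} (m : ℕ → ℕ → Mp p) (φ : ℕ → Mp p) (n : ℕ) : Mp p :=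
  -(VD m φ (n + 1) * (VD m φ n)⁻¹)

namespace Stmt7Aux

variable {p : ℕ} (m : ℕ → ℕ → Mp p) (φ : ℕ → Mp p)

/-- coefficient function of the monic polynomial `P_N`. -/
def cf (N : ℕ) : ℕ → Mp p := fun i =>
  if h : i < N then xiD m N ⟨i, h⟩ else if i = N then 1 else 0

lemma cf_lt {N i : ℕ} (h : i < N) : cf m N i = xiD m N ⟨i, h⟩ := dif_pos h

lemma cf_self (N : ℕ) : cf m N N = 1 := by simp [cf]

lemma cf_gt {N i : ℕ} (h : N < i) : cf m N i = 0 := by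
  have h1 : ¬ i < N := by omega
  have h2 : ¬ i = N := by omega
  simp [cf, h1, h2]

/-- `⟨P_N, x^k⟩`. -/
def prC (N k : ℕ) : Mp p := ∑ i ∈ range (N + 1), cf m N i * m i k

lemma prC_eq (N k : ℕ) :
    prC m N k = (∑ i : Fin N, xiD m N i * m i k) + m N k := by
  rw [prC, sum_range_succ, cf_self, one_mul]
  congr 1
  rw [← Fin.sum_univ_eq_sum_range (fun i => cf m N i * m i k) N]
  exact Finset.sum_congr rfl fun i _ => by rw [cf_lt m i.isLt]

/-- orthogonality: `⟨P_N, x^k⟩ = 0` for `k < N`. -/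
lemma prC_orth (hM : ∀ k, IsUnit (blockM m k)) (N : ℕ) {k : ℕ} (hk : k < N) :
    prC m N k = 0 := by
  have hdet : IsUnit (blockM m N).det := (Matrix.isUnit_iff_isUnit_det _).mp (hM N)
  have hinv : (blockM m N)⁻¹ * blockM m N = 1 := Matrix.nonsing_inv_mul _ hdet
  have key : (-(rowm m N)) * (blockM m N)⁻¹ * blockM m N = -(rowm m N) := by
    rw [Matrix.mul_assoc, hinv, Matrix.mul_one]
  have hxi : (∑ i : Fin N, xiD m N i * m i k) = -(m N k) := by
    ext a b
    have h := congrFun (congrFun key a) (⟨k, hk⟩, b)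
    rw [Matrix.mul_apply, Fintype.sum_prod_type] at h
    simp only [Matrix.sum_apply, Matrix.neg_apply]
    have h2 : ∑ c : Fin N, (xiD m N c * m (c : ℕ) k) a b
        = ∑ i : Fin N, ∑ y : Fin p,
            (-rowm m N * (blockM m N)⁻¹) a (i, y) * blockM m N (i, y) (⟨k, hk⟩, b) := by
      refine Finset.sum_congr rfl fun i _ => ?_
      rw [Matrix.mul_apply]
      rfl
    rw [h2, h]
    simp [rowm]
  rw [prC_eq, hxi]
  simp

lemma prC_diag (N : ℕ) : prC m N N = HmatD m N := by
  rw [prC_eq, HmatD, add_comm]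

lemma VD_eq (N : ℕ) : VD m φ N = ∑ i ∈ range (N + 1), cf m N i * φ i := by
  rw [VD, sum_range_succ, cf_self, one_mul, add_comm]
  congr 1
  rw [← Fin.sum_univ_eq_sum_range (fun i => cf m N i * φ i) N]
  exact Finset.sum_congr rfl fun i _ => by rw [cf_lt m i.isLt]

lemma prC_top (hsym : ∀ i j, m i j = (m j i)ᵀ) (hM : ∀ k, IsUnit (blockM m k)) (N : ℕ) :
    prC m N (N + 1) = -(HmatD m N * (xiD m (N + 1) ⟨N, Nat.lt_succ_self N⟩)ᵀ) := by
  have S0 : ∑ j ∈ range (N + 2), prC m N j * (cf m (N + 1) j)ᵀ = 0 := by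
    have step : ∑ j ∈ range (N + 2), prC m N j * (cf m (N + 1) j)ᵀ
        = ∑ i ∈ range (N + 1), cf m N i * (prC m (N + 1) i)ᵀ := by
      simp only [prC, Finset.sum_mul]
      rw [Finset.sum_comm]
      refine Finset.sum_congr rfl fun i _ => ?_
      rw [Matrix.transpose_sum, Finset.mul_sum]
      refine Finset.sum_congr rfl fun j _ => ?_
      rw [Matrix.transpose_mul, Matrix.mul_assoc, hsym i j]
    rw [step]
    refine Finset.sum_eq_zero fun i hi => ?_
    rw [prC_orth m hM (N + 1) (mem_range.mp hi), Matrix.transpose_zero, mul_zero]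
  rw [sum_range_succ, sum_range_succ] at S0
  have hz : ∑ j ∈ range N, prC m N j * (cf m (N + 1) j)ᵀ = 0 :=
    Finset.sum_eq_zero fun j hj => by
      rw [prC_orth m hM N (mem_range.mp hj), zero_mul]
  rw [hz, zero_add, cf_self, Matrix.transpose_one, mul_one,
    cf_lt m (Nat.lt_succ_self N), prC_diag] at S0
  linear_combination (norm := abel) S0

lemma prC_shift (hphi : ∀ i j, m (i + 1) j + m i (j + 1) = φ i * φ j) (N k : ℕ) :
    ∑ i ∈ range (N + 1), cf m N i * m (i + 1) k
      = VD m φ N * φ k - prC m N (k + 1) := by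
  have h : ∀ i : ℕ, m (i + 1) k = φ i * φ k - m i (k + 1) :=
    fun i => eq_sub_of_add_eq (hphi i k)
  rw [VD_eq, Finset.sum_mul, prC, ← Finset.sum_sub_distrib]
  refine Finset.sum_congr rfl fun i _ => ?_
  rw [h i, mul_sub, mul_assoc]

lemma uniq (hM : ∀ k, IsUnit (blockM m k)) (N : ℕ) (q : ℕ → Mp p)
    (h : ∀ k < N, ∑ i ∈ range N, q i * m i k = 0) : ∀ i < N, q i = 0 := by
  intro i hi
  set Q : Matrix (Fin p) (Fin N × Fin p) ℝ := Matrix.of fun a b => q b.1 a b.2 with hQdef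
  have hdet : IsUnit (blockM m N).det := (Matrix.isUnit_iff_isUnit_det _).mp (hM N)
  have hQ : Q * blockM m N = 0 := by
    ext a c
    obtain ⟨k, b⟩ := c
    rw [Matrix.mul_apply, Fintype.sum_prod_type]
    have h1 := congrFun (congrFun (h k k.isLt) a) b
    rw [Matrix.sum_apply] at h1
    have h2 : ∑ x : Fin N, ∑ y : Fin p, Q a (x, y) * blockM m N (x, y) (k, b)
        = ∑ x ∈ range N, (q x * m x (k : ℕ)) a b := by
      rw [← Fin.sum_univ_eq_sum_range (fun x => (q x * m x (k : ℕ)) a b) N]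
      refine Finset.sum_congr rfl fun x _ => ?_
      rw [Matrix.mul_apply]
      rfl
    rw [h2, h1]
    rfl
  have hQ0 : Q = 0 := by
    have : Q * (blockM m N * (blockM m N)⁻¹) = 0 := by
      rw [← Matrix.mul_assoc, hQ, Matrix.zero_mul]
    rwa [Matrix.mul_nonsing_inv _ hdet, Matrix.mul_one] at this
  ext a b
  have := congrFun (congrFun hQ0 a) (⟨i, hi⟩, b)
  exact this

/-- shift of a coefficient sequence: multiplication by `x`. -/
def shf (f : ℕ → Mp p) : ℕ → Mp p := fun k => match k with
  | 0 => 0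
  | k + 1 => f k

lemma Pev_eq (N : ℕ) (x : ℝ) :
    Pev m N x = ∑ i ∈ range (N + 1), x ^ i • cf m N i := by
  rw [Pev, sum_range_succ, cf_self, add_comm]
  congr 1
  rw [← Fin.sum_univ_eq_sum_range (fun i => x ^ i • cf m N i) N]
  exact Finset.sum_congr rfl fun i _ => by rw [cf_lt m i.isLt]

lemma Pev_ext (N K : ℕ) (x : ℝ) (h : N + 1 ≤ K) :
    Pev m N x = ∑ i ∈ range K, x ^ i • cf m N i := by
  rw [Pev_eq]
  apply Finset.sum_subset (Finset.range_subset_range.mpr h)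
  intro i _ hi
  rw [cf_gt m (by simp only [mem_range] at hi; omega), smul_zero]

lemma xPev (N K : ℕ) (x : ℝ) (h : N + 2 ≤ K) :
    x • Pev m N x = ∑ i ∈ range K, x ^ i • shf (cf m N) i := by
  obtain ⟨K', rfl⟩ : ∃ K', K = K' + 1 := ⟨K - 1, by omega⟩
  rw [Finset.sum_range_succ']
  have h0 : x ^ 0 • shf (cf m N) 0 = 0 := by simp [shf]
  rw [h0, add_zero]
  have hPe := Pev_ext m N K' x (by omega)
  rw [hPe, Finset.smul_sum]
  refine Finset.sum_congr rfl fun i _ => ?_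
  show x • (x ^ i • cf m N i) = x ^ (i + 1) • cf m N i
  rw [smul_smul, ← pow_succ']

lemma mulPev (A : Mp p) (N K : ℕ) (x : ℝ) (h : N + 1 ≤ K) :
    A * Pev m N x = ∑ i ∈ range K, x ^ i • (A * cf m N i) := by
  rw [Pev_ext m N K x h, Finset.mul_sum]
  exact Finset.sum_congr rfl fun i _ => mul_smul_comm _ _ _

end Stmt7Aux

/-- **Four-term recurrence relation.**  Let `m_{i,j} = m_{j,i}ᵀ` satisfy the algebraic
Cauchy-moment relations `m_{i+1,j} + m_{i,j+1} = φ_i φ_j`, with every block moment matrix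
invertible.  Fix `n ≥ 1` and assume `H_{n−1}, H_n, H_{n+1}, V_n, V_{n+1}` are invertible;
set `a_n = −V_{n+1} V_n⁻¹`, `b_n = −ξ_{n+2,n+1} + ξ_{n+1,n} + a_n`,
`c_n = −H_{n+1} H_n⁻¹ + a_n H_n (ξ_{n+1,n}ᵀ − ξ_{n,n−1}ᵀ) H_n⁻¹`, `d_n = −a_n H_n H_{n−1}⁻¹`.
Then `x (P_{n+1}(x) + a_n P_n(x)) = P_{n+2}(x) + b_n P_{n+1}(x) + c_n P_n(x) + d_n P_{n−1}(x)`
as an identity of matrix polynomials. -/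
theorem stmt7 {p : ℕ} (hp : 1 ≤ p) (m : ℕ → ℕ → Mp p) (φ : ℕ → Mp p)
    (hsym : ∀ i j, m i j = (m j i)ᵀ)
    (hphi : ∀ i j, m (i + 1) j + m i (j + 1) = φ i * φ j)
    (hM : ∀ k, IsUnit (blockM m k))
    (n : ℕ) (hn : 1 ≤ n)
    (hH0 : IsUnit (HmatD m (n - 1))) (hH1 : IsUnit (HmatD m n))
    (hH2 : IsUnit (HmatD m (n + 1)))
    (hV1 : IsUnit (VD m φ n)) (hV2 : IsUnit (VD m φ (n + 1))) :
    ∀ x : ℝ,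
      x • (Pev m (n + 1) x + aD m φ n * Pev m n x)
        = Pev m (n + 2) x
          + (-xiD m (n + 2) ⟨n + 1, by omega⟩ + xiD m (n + 1) ⟨n, by omega⟩ + aD m φ n)
              * Pev m (n + 1) x
          + (-(HmatD m (n + 1) * (HmatD m n)⁻¹)
              + aD m φ n * HmatD m n
                * ((xiD m (n + 1) ⟨n, by omega⟩)ᵀ - (xiD m n ⟨n - 1, by omega⟩)ᵀ)
                * (HmatD m n)⁻¹) * Pev m n x
          + (-(aD m φ n * HmatD m n * (HmatD m (n - 1))⁻¹)) * Pev m (n - 1) x := by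
  obtain ⟨n', rfl⟩ : ∃ n', n = n' + 1 := ⟨n - 1, by omega⟩
  intro x
  simp only [Nat.add_sub_cancel] at hH0
  show x • (Pev m (n' + 2) x + aD m φ (n' + 1) * Pev m (n' + 1) x)
      = Pev m (n' + 3) x
        + (-xiD m (n' + 3) ⟨n' + 2, by omega⟩ + xiD m (n' + 2) ⟨n' + 1, by omega⟩
            + aD m φ (n' + 1)) * Pev m (n' + 2) x
        + (-(HmatD m (n' + 2) * (HmatD m (n' + 1))⁻¹)
            + aD m φ (n' + 1) * HmatD m (n' + 1)
              * ((xiD m (n' + 2) ⟨n' + 1, by omega⟩)ᵀ - (xiD m (n' + 1) ⟨n', by omega⟩)ᵀ)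
              * (HmatD m (n' + 1))⁻¹) * Pev m (n' + 1) x
        + (-(aD m φ (n' + 1) * HmatD m (n' + 1) * (HmatD m n')⁻¹)) * Pev m n' x
  set a : Mp p := aD m φ (n' + 1) with ha
  set B : Mp p := -xiD m (n' + 3) ⟨n' + 2, by omega⟩ + xiD m (n' + 2) ⟨n' + 1, by omega⟩ + a
    with hB
  set C : Mp p := -(HmatD m (n' + 2) * (HmatD m (n' + 1))⁻¹)
      + a * HmatD m (n' + 1)
        * ((xiD m (n' + 2) ⟨n' + 1, by omega⟩)ᵀ - (xiD m (n' + 1) ⟨n', by omega⟩)ᵀ)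
        * (HmatD m (n' + 1))⁻¹ with hC
  set D : Mp p := -(a * HmatD m (n' + 1) * (HmatD m n')⁻¹) with hD
  -- invertibility facts
  have hdV1 : IsUnit (VD m φ (n' + 1)).det := (Matrix.isUnit_iff_isUnit_det _).mp hV1
  have hdH0 : IsUnit (HmatD m n').det := (Matrix.isUnit_iff_isUnit_det _).mp hH0
  have hdH1 : IsUnit (HmatD m (n' + 1)).det := (Matrix.isUnit_iff_isUnit_det _).mp hH1
  have e0 : (HmatD m n')⁻¹ * HmatD m n' = 1 := Matrix.nonsing_inv_mul _ hdH0
  have e1 : (HmatD m (n' + 1))⁻¹ * HmatD m (n' + 1) = 1 := Matrix.nonsing_inv_mul _ hdH1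
  have haV : a * VD m φ (n' + 1) = -VD m φ (n' + 2) := by
    show aD m φ (n' + 1) * VD m φ (n' + 1) = -VD m φ (n' + 2)
    have : aD m φ (n' + 1) = -(VD m φ (n' + 2) * (VD m φ (n' + 1))⁻¹) := rfl
    rw [this, neg_mul, Matrix.mul_assoc, Matrix.nonsing_inv_mul _ hdV1, Matrix.mul_one]
  -- the coefficient sequence of LHS minus RHS
  set q : ℕ → Mp p := fun k =>
    (Stmt7Aux.shf (Stmt7Aux.cf m (n' + 2)) k + a * Stmt7Aux.shf (Stmt7Aux.cf m (n' + 1)) k)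
    - (Stmt7Aux.cf m (n' + 3) k + B * Stmt7Aux.cf m (n' + 2) k
        + C * Stmt7Aux.cf m (n' + 1) k + D * Stmt7Aux.cf m n' k) with hq
  -- the orthogonality relations for q
  have hS : ∀ k, k < n' + 2 → ∑ i ∈ range (n' + 4), q i * m i k = 0 := by
    intro k hk
    have expand : ∑ i ∈ range (n' + 4), q i * m i k
        = ((∑ i ∈ range (n' + 4), Stmt7Aux.shf (Stmt7Aux.cf m (n' + 2)) i * m i k)
            + a * (∑ i ∈ range (n' + 4), Stmt7Aux.shf (Stmt7Aux.cf m (n' + 1)) i * m i k))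
          - ((∑ i ∈ range (n' + 4), Stmt7Aux.cf m (n' + 3) i * m i k)
              + B * (∑ i ∈ range (n' + 4), Stmt7Aux.cf m (n' + 2) i * m i k)
              + C * (∑ i ∈ range (n' + 4), Stmt7Aux.cf m (n' + 1) i * m i k)
              + D * (∑ i ∈ range (n' + 4), Stmt7Aux.cf m n' i * m i k)) := by
      rw [Finset.mul_sum, Finset.mul_sum, Finset.mul_sum, Finset.mul_sum,
        ← Finset.sum_add_distrib, ← Finset.sum_add_distrib, ← Finset.sum_add_distrib,
        ← Finset.sum_add_distrib, ← Finset.sum_sub_distrib]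
      refine Finset.sum_congr rfl fun i _ => ?_
      rw [hq]
      noncomm_ring
    rw [expand]
    -- the six sums
    have hT1 : ∑ i ∈ range (n' + 4), Stmt7Aux.shf (Stmt7Aux.cf m (n' + 2)) i * m i k
        = VD m φ (n' + 2) * φ k - Stmt7Aux.prC m (n' + 2) (k + 1) := by
      rw [Finset.sum_range_succ']
      have h0 : Stmt7Aux.shf (Stmt7Aux.cf m (n' + 2)) 0 * m 0 k = 0 := by
        show (0 : Mp p) * m 0 k = 0; rw [zero_mul]
      rw [h0, add_zero]
      exact Stmt7Aux.prC_shift m φ hphi (n' + 2) k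
    have hT2 : ∑ i ∈ range (n' + 4), Stmt7Aux.shf (Stmt7Aux.cf m (n' + 1)) i * m i k
        = VD m φ (n' + 1) * φ k - Stmt7Aux.prC m (n' + 1) (k + 1) := by
      rw [Finset.sum_range_succ']
      have h0 : Stmt7Aux.shf (Stmt7Aux.cf m (n' + 1)) 0 * m 0 k = 0 := by
        show (0 : Mp p) * m 0 k = 0; rw [zero_mul]
      rw [h0, add_zero]
      have htop : Stmt7Aux.shf (Stmt7Aux.cf m (n' + 1)) (n' + 2 + 1) * m (n' + 2 + 1) k = 0 := by
        show Stmt7Aux.cf m (n' + 1) (n' + 2) * m (n' + 3) k = 0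
        rw [Stmt7Aux.cf_gt m (by omega), zero_mul]
      rw [show n' + 3 = n' + 2 + 1 from rfl, Finset.sum_range_succ, htop, add_zero]
      exact Stmt7Aux.prC_shift m φ hphi (n' + 1) k
    have hT3 : ∑ i ∈ range (n' + 4), Stmt7Aux.cf m (n' + 3) i * m i k
        = Stmt7Aux.prC m (n' + 3) k := rfl
    have hT4 : ∑ i ∈ range (n' + 4), Stmt7Aux.cf m (n' + 2) i * m i k
        = Stmt7Aux.prC m (n' + 2) k := by
      rw [show n' + 4 = n' + 3 + 1 from rfl, Finset.sum_range_succ,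
        Stmt7Aux.cf_gt m (show n' + 2 < n' + 3 by omega), zero_mul, add_zero]
      rfl
    have hT5 : ∑ i ∈ range (n' + 4), Stmt7Aux.cf m (n' + 1) i * m i k
        = Stmt7Aux.prC m (n' + 1) k := by
      rw [show n' + 4 = n' + 3 + 1 from rfl, Finset.sum_range_succ,
        Stmt7Aux.cf_gt m (show n' + 1 < n' + 3 by omega), zero_mul, add_zero,
        show n' + 3 = n' + 2 + 1 from rfl, Finset.sum_range_succ,
        Stmt7Aux.cf_gt m (show n' + 1 < n' + 2 by omega), zero_mul, add_zero]
      rfl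
    have hT6 : ∑ i ∈ range (n' + 4), Stmt7Aux.cf m n' i * m i k
        = Stmt7Aux.prC m n' k := by
      rw [show n' + 4 = n' + 3 + 1 from rfl, Finset.sum_range_succ,
        Stmt7Aux.cf_gt m (show n' < n' + 3 by omega), zero_mul, add_zero,
        show n' + 3 = n' + 2 + 1 from rfl, Finset.sum_range_succ,
        Stmt7Aux.cf_gt m (show n' < n' + 2 by omega), zero_mul, add_zero,
        show n' + 2 = n' + 1 + 1 from rfl, Finset.sum_range_succ,
        Stmt7Aux.cf_gt m (show n' < n' + 1 by omega), zero_mul, add_zero]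
      rfl
    rw [hT1, hT2, hT3, hT4, hT5, hT6]
    -- cancel the φ k terms
    have hcan : VD m φ (n' + 2) * φ k + a * (VD m φ (n' + 1) * φ k)
        = 0 := by
      rw [← Matrix.mul_assoc, haV, neg_mul, add_neg_cancel]
    -- now case on k
    have e0c : ∀ X : Mp p, (HmatD m n')⁻¹ * (HmatD m n' * X) = X :=
      fun X => Matrix.nonsing_inv_mul_cancel_left _ X hdH0
    have e1c : ∀ X : Mp p, (HmatD m (n' + 1))⁻¹ * (HmatD m (n' + 1) * X) = X :=
      fun X => Matrix.nonsing_inv_mul_cancel_left _ X hdH1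
    rcases (show k < n' ∨ k = n' ∨ k = n' + 1 by omega) with h | h | h
    · rw [Stmt7Aux.prC_orth m hM (n' + 2) (show k + 1 < n' + 2 by omega),
        Stmt7Aux.prC_orth m hM (n' + 1) (show k + 1 < n' + 1 by omega),
        Stmt7Aux.prC_orth m hM (n' + 3) (show k < n' + 3 by omega),
        Stmt7Aux.prC_orth m hM (n' + 2) (show k < n' + 2 by omega),
        Stmt7Aux.prC_orth m hM (n' + 1) (show k < n' + 1 by omega),
        Stmt7Aux.prC_orth m hM n' h]
      simp only [sub_zero, mul_zero, add_zero, zero_add]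
      exact hcan
    · rw [h] at hcan ⊢
      rw [Stmt7Aux.prC_orth m hM (n' + 2) (show n' + 1 < n' + 2 by omega),
        Stmt7Aux.prC_diag m (n' + 1),
        Stmt7Aux.prC_orth m hM (n' + 3) (show n' < n' + 3 by omega),
        Stmt7Aux.prC_orth m hM (n' + 2) (show n' < n' + 2 by omega),
        Stmt7Aux.prC_orth m hM (n' + 1) (show n' < n' + 1 by omega),
        Stmt7Aux.prC_diag m n', hD]
      simp only [sub_zero, mul_zero, add_zero, zero_add, mul_sub, neg_mul,
        Matrix.mul_assoc, e0c, e0, Matrix.mul_one]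
      linear_combination (norm := abel) hcan
    · rw [h] at hcan ⊢
      rw [show n' + 1 + 1 = n' + 2 from rfl]
      have hd2 : Stmt7Aux.prC m (n' + 2) (n' + 2) = HmatD m (n' + 2) :=
        Stmt7Aux.prC_diag m (n' + 2)
      have ht1 : Stmt7Aux.prC m (n' + 1) (n' + 2)
          = -(HmatD m (n' + 1) * (xiD m (n' + 2) ⟨n' + 1, by omega⟩)ᵀ) :=
        Stmt7Aux.prC_top m hsym hM (n' + 1)
      have ht0 : Stmt7Aux.prC m n' (n' + 1)
          = -(HmatD m n' * (xiD m (n' + 1) ⟨n', by omega⟩)ᵀ) :=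
        Stmt7Aux.prC_top m hsym hM n'
      rw [hd2, ht1,
        Stmt7Aux.prC_orth m hM (n' + 3) (show n' + 1 < n' + 3 by omega),
        Stmt7Aux.prC_orth m hM (n' + 2) (show n' + 1 < n' + 2 by omega),
        Stmt7Aux.prC_diag m (n' + 1), ht0, hC, hD]
      simp only [mul_sub, mul_add, sub_neg_eq_add, mul_neg, neg_mul, mul_zero, add_zero,
        zero_add, neg_neg, add_mul, sub_mul, Matrix.mul_assoc, e1, e0, e1c, e0c, Matrix.mul_one]
      linear_combination (norm := abel) hcan
  -- top coefficients vanish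
  have hq2 : q (n' + 2) = 0 := by
    simp only [hq]
    have e1' : Stmt7Aux.shf (Stmt7Aux.cf m (n' + 2)) (n' + 2) = Stmt7Aux.cf m (n' + 2) (n' + 1) := rfl
    have e2' : Stmt7Aux.shf (Stmt7Aux.cf m (n' + 1)) (n' + 2) = Stmt7Aux.cf m (n' + 1) (n' + 1) := rfl
    rw [e1', e2', Stmt7Aux.cf_lt m (show n' + 1 < n' + 2 by omega), Stmt7Aux.cf_self,
      Stmt7Aux.cf_lt m (show n' + 2 < n' + 3 by omega), Stmt7Aux.cf_self,
      Stmt7Aux.cf_gt m (show n' + 1 < n' + 2 by omega),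
      Stmt7Aux.cf_gt m (show n' < n' + 2 by omega), hB]
    rw [mul_one, mul_one, mul_zero, mul_zero, add_zero, add_zero]
    abel
  have hq3 : q (n' + 3) = 0 := by
    simp only [hq]
    have e1' : Stmt7Aux.shf (Stmt7Aux.cf m (n' + 2)) (n' + 3) = Stmt7Aux.cf m (n' + 2) (n' + 2) := rfl
    have e2' : Stmt7Aux.shf (Stmt7Aux.cf m (n' + 1)) (n' + 3) = Stmt7Aux.cf m (n' + 1) (n' + 2) := rfl
    rw [e1', e2', Stmt7Aux.cf_self, Stmt7Aux.cf_self,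
      Stmt7Aux.cf_gt m (show n' + 1 < n' + 2 by omega),
      Stmt7Aux.cf_gt m (show n' + 2 < n' + 3 by omega),
      Stmt7Aux.cf_gt m (show n' + 1 < n' + 3 by omega),
      Stmt7Aux.cf_gt m (show n' < n' + 3 by omega)]
    simp
  -- uniqueness gives q k = 0 for k < n'+2
  have hqlow : ∀ k, k < n' + 2 → q k = 0 := by
    refine Stmt7Aux.uniq m hM (n' + 2) q fun k hk => ?_
    have := hS k hk
    rw [show n' + 4 = n' + 3 + 1 from rfl, Finset.sum_range_succ,
      show n' + 3 = n' + 2 + 1 from rfl, Finset.sum_range_succ, hq2, hq3,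
      zero_mul, zero_mul, add_zero, add_zero] at this
    exact this
  have key : ∀ k, k < n' + 4 →
      Stmt7Aux.shf (Stmt7Aux.cf m (n' + 2)) k + a * Stmt7Aux.shf (Stmt7Aux.cf m (n' + 1)) k
        = Stmt7Aux.cf m (n' + 3) k + B * Stmt7Aux.cf m (n' + 2) k
            + C * Stmt7Aux.cf m (n' + 1) k + D * Stmt7Aux.cf m n' k := by
    intro k hk
    rcases (show k < n' + 2 ∨ k = n' + 2 ∨ k = n' + 3 by omega) with h | h | h
    · have := hqlow k h
      simp only [hq] at this
      exact sub_eq_zero.mp this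
    · rw [h]
      have := hq2
      simp only [hq] at this
      exact sub_eq_zero.mp this
    · rw [h]
      have := hq3
      simp only [hq] at this
      exact sub_eq_zero.mp this
  -- final assembly
  rw [smul_add, ← mul_smul_comm x a (Pev m (n' + 1) x),
    Stmt7Aux.xPev m (n' + 2) (n' + 4) x (by omega),
    Stmt7Aux.xPev m (n' + 1) (n' + 4) x (by omega),
    Stmt7Aux.Pev_ext m (n' + 3) (n' + 4) x (by omega),
    Stmt7Aux.mulPev m B (n' + 2) (n' + 4) x (by omega),
    Stmt7Aux.mulPev m C (n' + 1) (n' + 4) x (by omega),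
    Stmt7Aux.mulPev m D n' (n' + 4) x (by omega),
    Finset.mul_sum,
    ← Finset.sum_add_distrib, ← Finset.sum_add_distrib, ← Finset.sum_add_distrib,
    ← Finset.sum_add_distrib]
  refine Finset.sum_congr rfl fun k hk => ?_
  rw [mul_smul_comm, ← smul_add, ← smul_add, ← smul_add, ← smul_add]
  rw [key k (Finset.mem_range.mp hk)]
end
end

section
/- For every n ≥ 0 (with M_n and M_{n+1} invertible), define Z_n = m_{n,n+1} + Σ_{i=0}^{n−1} ξ_{n,i} m_{i,n+1}. Then Z_n^T = −ξ_{n+1,n} H_n. -/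
open Matrix

noncomputable section

lemma xi_eq {p k : ℕ} (m : ℕ → ℕ → Mp p) (hk : IsUnit (blockM m k)) (j : Fin k) :
    ∑ i : Fin k, xiD m k i * m i j = -(m k j) := by
  have hd := (Matrix.isUnit_iff_isUnit_det _).mp hk
  have h : ((-(rowm m k)) * (blockM m k)⁻¹) * (blockM m k) = -(rowm m k) := by
    rw [Matrix.mul_assoc, Matrix.nonsing_inv_mul _ hd, Matrix.mul_one]
  ext a b
  have h2 := congrFun (congrFun h a) (j, b)
  simp only [Matrix.mul_apply, Fintype.sum_prod_type, Matrix.neg_apply, rowm, blockM,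
    Matrix.of_apply] at h2
  simp only [Matrix.sum_apply, Matrix.mul_apply, xiD, Matrix.of_apply, Matrix.neg_apply,
    blockM, rowm, Fintype.sum_prod_type]
  exact h2

/-- With symmetric moments `m_{i,j} = m_{j,i}ᵀ` and every block moment matrix invertible,
the quantity `Z_n = m_{n,n+1} + Σ_{i=0}^{n−1} ξ_{n,i} m_{i,n+1}` satisfies
`Z_nᵀ = −ξ_{n+1,n} H_n` for every `n ≥ 0`. -/
theorem stmt8 {p : ℕ} (hp : 1 ≤ p) (m : ℕ → ℕ → Mp p)
    (hsym : ∀ i j, m i j = (m j i)ᵀ)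
    (hM : ∀ k, IsUnit (blockM m k)) :
    ∀ n : ℕ,
      (m n (n + 1) + ∑ i : Fin n, xiD m n i * m i (n + 1))ᵀ
        = -(xiD m (n + 1) ⟨n, Nat.lt_succ_self n⟩ * HmatD m n) := by
  intro n
  have hdN : IsUnit (blockM m n).det := (Matrix.isUnit_iff_isUnit_det _).mp (hM n)
  have hNsymm : (blockM m n)ᵀ = blockM m n := by
    ext ⟨i, c⟩ ⟨j, b⟩
    simp only [Matrix.transpose_apply, blockM, Matrix.of_apply]
    rw [hsym]
    rfl
  have hNinvs : ((blockM m n)⁻¹)ᵀ = (blockM m n)⁻¹ := by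
    rw [Matrix.transpose_nonsing_inv, hNsymm]
  have h1 : ∀ j : Fin n,
      (∑ i : Fin n, xiD m (n+1) (Fin.castSucc i) * m i j)
        + xiD m (n+1) (Fin.last n) * m n j = -(m (n+1) j) := by
    intro j
    have h := xi_eq m (hM (n+1)) (Fin.castSucc j)
    rw [Fin.sum_univ_castSucc] at h
    simpa using h
  have h2 : (∑ i : Fin n, xiD m (n+1) (Fin.castSucc i) * m i n)
        + xiD m (n+1) (Fin.last n) * m n n = -(m (n+1) n) := by
    have h := xi_eq m (hM (n+1)) (Fin.last n)
    rw [Fin.sum_univ_castSucc] at h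
    simpa using h
  have h3 : ∀ j : Fin n, ∑ i : Fin n, xiD m n i * m i j = -(m n j) :=
    fun j => xi_eq m (hM n) j
  have hψblock : ∀ j : Fin n,
      ∑ i : Fin n, (xiD m (n+1) (Fin.castSucc i) - xiD m (n+1) (Fin.last n) * xiD m n i) * m i j
        = -(m (n+1) j) := by
    intro j
    have e : ∑ i : Fin n,
        (xiD m (n+1) (Fin.castSucc i) - xiD m (n+1) (Fin.last n) * xiD m n i) * m i j
        = (∑ i : Fin n, xiD m (n+1) (Fin.castSucc i) * m i j)
            - xiD m (n+1) (Fin.last n) * ∑ i : Fin n, xiD m n i * m i j := by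
      rw [Finset.mul_sum, ← Finset.sum_sub_distrib]
      exact Finset.sum_congr rfl fun i _ => by rw [sub_mul, mul_assoc]
    rw [e, h3 j, mul_neg, sub_neg_eq_add]
    exact h1 j
  set ψ : Matrix (Fin p) (Fin n × Fin p) ℝ := Matrix.of (fun a b =>
    (xiD m (n+1) (Fin.castSucc b.1) - xiD m (n+1) (Fin.last n) * xiD m n b.1) a b.2) with hψdef
  set r' : Matrix (Fin p) (Fin n × Fin p) ℝ := Matrix.of (fun a b => m (n+1) b.1 a b.2) with hr'
  have hψN : ψ * blockM m n = -r' := by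
    ext a jb
    obtain ⟨j, b⟩ := jb
    have h := congrFun (congrFun (hψblock j) a) b
    simp only [Matrix.sum_apply, Matrix.mul_apply, Fintype.sum_prod_type, Matrix.of_apply,
      Matrix.neg_apply, hψdef, hr', blockM, Matrix.sub_apply] at h ⊢
    exact h
  have hψ : ψ = -r' * (blockM m n)⁻¹ := by
    calc ψ = ψ * blockM m n * (blockM m n)⁻¹ := by
          rw [Matrix.mul_assoc, Matrix.mul_nonsing_inv _ hdN, Matrix.mul_one]
      _ = -r' * (blockM m n)⁻¹ := by rw [hψN]
  have mid : r' * ((-(rowm m n)) * (blockM m n)⁻¹)ᵀ = ψ * (rowm m n)ᵀ := by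
    rw [hψ, Matrix.transpose_mul, hNinvs, Matrix.transpose_neg, Matrix.mul_neg,
      Matrix.neg_mul, Matrix.neg_mul, Matrix.mul_neg, ← Matrix.mul_assoc]
  have key : ∑ i : Fin n, m (n+1) i * (xiD m n i)ᵀ
      = ∑ i : Fin n, (xiD m (n+1) (Fin.castSucc i) - xiD m (n+1) (Fin.last n) * xiD m n i) * m i n := by
    have lhs_eq : ∀ a b : Fin p, (∑ i : Fin n, m (n+1) i * (xiD m n i)ᵀ) a b
        = (r' * ((-(rowm m n)) * (blockM m n)⁻¹)ᵀ) a b := by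
      intro a b
      simp only [Matrix.sum_apply, Matrix.mul_apply, Fintype.sum_prod_type, Matrix.of_apply,
        Matrix.transpose_apply, xiD, hr', Matrix.neg_apply, rowm]
    have rhs_eq : ∀ a b : Fin p,
        (∑ i : Fin n, (xiD m (n+1) (Fin.castSucc i) - xiD m (n+1) (Fin.last n) * xiD m n i) * m i n) a b
        = (ψ * (rowm m n)ᵀ) a b := by
      intro a b
      simp only [Matrix.sum_apply, Matrix.mul_apply, Fintype.sum_prod_type, Matrix.of_apply,
        Matrix.transpose_apply, hψdef, rowm, Matrix.sub_apply]
      refine Finset.sum_congr rfl fun i _ => Finset.sum_congr rfl fun c _ => ?_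
      rw [hsym n i]
      rfl
    ext a b
    rw [lhs_eq a b, mid, ← rhs_eq a b]
  have hLHS : (m n (n+1) + ∑ i : Fin n, xiD m n i * m i (n+1))ᵀ
      = m (n+1) n + ∑ i : Fin n, m (n+1) i * (xiD m n i)ᵀ := by
    rw [Matrix.transpose_add, Matrix.transpose_sum]
    congr 1
    · exact (hsym (n+1) n).symm
    · exact Finset.sum_congr rfl fun i _ => by rw [Matrix.transpose_mul, ← hsym]
  have hlast : (⟨n, Nat.lt_succ_self n⟩ : Fin (n+1)) = Fin.last n := rfl
  rw [hLHS, hlast, key]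
  have e2 : xiD m (n+1) (Fin.last n) * m n n
      = -(m (n+1) n) - ∑ i : Fin n, xiD m (n+1) (Fin.castSucc i) * m i n :=
    eq_sub_of_add_eq' h2
  rw [HmatD, mul_add, e2, Finset.mul_sum]
  have e3 : ∑ i : Fin n,
      (xiD m (n+1) (Fin.castSucc i) - xiD m (n+1) (Fin.last n) * xiD m n i) * m i n
      = (∑ i : Fin n, xiD m (n+1) (Fin.castSucc i) * m i n)
          - ∑ i : Fin n, xiD m (n+1) (Fin.last n) * (xiD m n i * m i n) := by
    rw [← Finset.sum_sub_distrib]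
    exact Finset.sum_congr rfl fun i _ => by rw [sub_mul, mul_assoc]
  rw [e3]
  abel
end
end

section
/- (Noncommutative Jacobi identity for quasideterminants.) Let R be a (possibly noncommutative) ring with 1, n ≥ 1, A an n×n matrix over R, B and C column n-vectors over R, D and E row n-vectors over R, and f, g, h, i ∈ R. Assume A is invertible over R and the quasideterminant f − D A^{-1} B is invertible in R. Then the (n+1)×(n+1) block matrix K = [[A, B],[D, f]] is invertible over R, and i − (E, h) K^{-1} (C; g) = (i − E A^{-1} C) − (h − E A^{-1} B)(f − D A^{-1} B)^{-1}(g − D A^{-1} C). -/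
open Matrix

/-- **Noncommutative Jacobi identity for quasideterminants.**
`R` is a possibly noncommutative ring with 1, `A` an invertible `n × n` matrix over `R`
(with two-sided inverse `A'`), `B C` column `n`-vectors, `D E` row `n`-vectors, and
`f g h i ∈ R`.  Assuming the quasideterminant `f − D A⁻¹ B` is invertible in `R`
(with two-sided inverse `q`), the block matrix `K = [[A, B], [D, f]]` is invertible
over `R`, and for any two-sided inverse `K'` of `K`,
`i − (E, h) K⁻¹ (C; g) = (i − E A⁻¹ C) − (h − E A⁻¹ B)(f − D A⁻¹ B)⁻¹(g − D A⁻¹ C)`. -/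
theorem stmt17 {R : Type*} [Ring R] (n : ℕ) (hn : 1 ≤ n)
    (A : Matrix (Fin n) (Fin n) R) (B C : Fin n → R) (D E : Fin n → R)
    (f g h i : R)
    (A' : Matrix (Fin n) (Fin n) R) (hA1 : A * A' = 1) (hA2 : A' * A = 1)
    (q : R) (hq1 : (f - (D ᵥ* A') ⬝ᵥ B) * q = 1) (hq2 : q * (f - (D ᵥ* A') ⬝ᵥ B) = 1) :
    IsUnit (Matrix.fromBlocks A (Matrix.of fun k (_ : Unit) => B k)
      (Matrix.of fun (_ : Unit) k => D k) (Matrix.of fun (_ : Unit) (_ : Unit) => f)) ∧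
    ∀ K' : Matrix (Fin n ⊕ Unit) (Fin n ⊕ Unit) R,
      Matrix.fromBlocks A (Matrix.of fun k (_ : Unit) => B k)
        (Matrix.of fun (_ : Unit) k => D k) (Matrix.of fun (_ : Unit) (_ : Unit) => f) * K' = 1 →
      K' * Matrix.fromBlocks A (Matrix.of fun k (_ : Unit) => B k)
        (Matrix.of fun (_ : Unit) k => D k) (Matrix.of fun (_ : Unit) (_ : Unit) => f) = 1 →
      i - (Sum.elim E (fun _ => h) ᵥ* K') ⬝ᵥ Sum.elim C (fun _ => g)
        = (i - (E ᵥ* A') ⬝ᵥ C) - (h - (E ᵥ* A') ⬝ᵥ B) * q * (g - (D ᵥ* A') ⬝ᵥ C) := by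
  set Bc : Matrix (Fin n) Unit R := Matrix.of fun k (_ : Unit) => B k with hBc
  set Dr : Matrix Unit (Fin n) R := Matrix.of fun (_ : Unit) k => D k with hDr
  set fm : Matrix Unit Unit R := Matrix.of fun (_ : Unit) (_ : Unit) => f with hfm
  set qm : Matrix Unit Unit R := Matrix.of fun (_ : Unit) (_ : Unit) => q with hqm
  have key : Dr * A' * Bc = Matrix.of fun (_ : Unit) (_ : Unit) => (D ᵥ* A') ⬝ᵥ B := by
    ext u v
    simp [hDr, hBc, mul_apply, vecMul, dotProduct, Finset.sum_mul]
  have hs1 : (fm - Dr * A' * Bc) * qm = 1 := by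
    ext u v
    simp [key, hfm, hqm, mul_apply, one_apply, hq1]
  have hs2 : qm * (fm - Dr * A' * Bc) = 1 := by
    ext u v
    simp [key, hfm, hqm, mul_apply, one_apply, hq2]
  -- cancellation lemmas
  have cancelA : ∀ {p : Type} (X : Matrix (Fin n) p R), A * (A' * X) = X := by
    intro p X; rw [← Matrix.mul_assoc, hA1, Matrix.one_mul]
  have hfq0 : fm * qm = 1 + Dr * (A' * (Bc * qm)) := by
    have h0 := hs1
    rw [sub_mul, sub_eq_iff_eq_add] at h0
    rw [h0]
    simp [Matrix.mul_assoc]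
  have hfq : ∀ {p : Type} (X : Matrix Unit p R),
      fm * (qm * X) = X + Dr * (A' * (Bc * (qm * X))) := by
    intro p X
    rw [← Matrix.mul_assoc, hfq0]
    simp only [Matrix.add_mul, Matrix.one_mul, Matrix.mul_assoc]
  have hqf0 : qm * fm = 1 + qm * (Dr * (A' * Bc)) := by
    have h0 := hs2
    rw [mul_sub, sub_eq_iff_eq_add] at h0
    rw [h0]
    simp [Matrix.mul_assoc]
  set M : Matrix (Fin n ⊕ Unit) (Fin n ⊕ Unit) R :=
    Matrix.fromBlocks (A' + A' * Bc * qm * Dr * A') (-(A' * Bc * qm))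
      (-(qm * Dr * A')) qm with hM
  have eTL : A * (A' + A' * Bc * qm * Dr * A') + Bc * (-(qm * Dr * A')) = 1 := by
    simp only [Matrix.mul_add, Matrix.mul_neg, Matrix.mul_assoc, cancelA, hA1]
    abel
  have eTR : A * (-(A' * Bc * qm)) + Bc * qm = 0 := by
    simp only [Matrix.mul_neg, Matrix.mul_assoc, cancelA]
    abel
  have eBL : Dr * (A' + A' * Bc * qm * Dr * A') + fm * (-(qm * Dr * A')) = 0 := by
    simp only [Matrix.mul_add, Matrix.mul_neg, Matrix.mul_assoc, hfq]
    abel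
  have eBR : Dr * (-(A' * Bc * qm)) + fm * qm = 1 := by
    simp only [Matrix.mul_neg, Matrix.mul_assoc, hfq0]
    abel
  have eTL' : (A' + A' * Bc * qm * Dr * A') * A + (-(A' * Bc * qm)) * Dr = 1 := by
    simp only [Matrix.add_mul, Matrix.neg_mul, Matrix.mul_assoc, hA2, Matrix.mul_one]
    abel
  have eTR' : (A' + A' * Bc * qm * Dr * A') * Bc + (-(A' * Bc * qm)) * fm = 0 := by
    simp only [Matrix.add_mul, Matrix.neg_mul, Matrix.mul_assoc, hqf0, Matrix.mul_add, Matrix.mul_one]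
    abel
  have eBL' : (-(qm * Dr * A')) * A + qm * Dr = 0 := by
    simp only [Matrix.neg_mul, Matrix.mul_assoc, hA2, Matrix.mul_one]
    abel
  have eBR' : (-(qm * Dr * A')) * Bc + qm * fm = 1 := by
    simp only [Matrix.neg_mul, Matrix.mul_assoc, hqf0]
    abel
  have hKM : Matrix.fromBlocks A Bc Dr fm * M = 1 := by
    rw [hM, fromBlocks_multiply, eTL, eTR, eBL, eBR, fromBlocks_one]
  have hMK : M * Matrix.fromBlocks A Bc Dr fm = 1 := by
    rw [hM, fromBlocks_multiply, eTL', eTR', eBL', eBR', fromBlocks_one]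
  refine ⟨⟨⟨_, M, hKM, hMK⟩, rfl⟩, ?_⟩
  intro K' hK1 hK2
  have hK'M : K' = M := by
    calc K' = K' * (Matrix.fromBlocks A Bc Dr fm * M) := by rw [hKM, Matrix.mul_one]
      _ = (K' * Matrix.fromBlocks A Bc Dr fm) * M := by rw [Matrix.mul_assoc]
      _ = M := by rw [hK2, Matrix.one_mul]
  subst hK'M
  -- evaluation lemmas
  have eBcv : ∀ v : Fin n → R, v ᵥ* Bc = fun _ : Unit => v ⬝ᵥ B := by
    intro v; ext u; simp [hBc, vecMul, dotProduct]
  have eqmv : ∀ w : Unit → R, w ᵥ* qm = fun _ : Unit => w () * q := by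
    intro w; ext u; simp [hqm, vecMul, dotProduct]
  have eDrv : ∀ w : Unit → R, w ᵥ* Dr = fun k => w () * D k := by
    intro w; ext k; simp [hDr, vecMul, dotProduct]
  have eSc : ∀ c : R, (fun k => c * D k) ᵥ* A' = fun j => c * (D ᵥ* A') j := by
    intro c; ext j; simp [vecMul, dotProduct, Finset.mul_sum, mul_assoc]
  have eDot : ∀ (c : R) (v w : Fin n → R), (fun j => c * v j) ⬝ᵥ w = c * (v ⬝ᵥ w) := by
    intro c v w; simp [dotProduct, Finset.mul_sum, mul_assoc]
  have main : (Sum.elim E (fun _ => h) ᵥ* M) ⬝ᵥ Sum.elim C (fun _ => g)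
      = (E ᵥ* A') ⬝ᵥ C + ((E ᵥ* A') ⬝ᵥ B) * (q * ((D ᵥ* A') ⬝ᵥ C))
        - h * (q * ((D ᵥ* A') ⬝ᵥ C)) + (h - (E ᵥ* A') ⬝ᵥ B) * (q * g) := by
    rw [hM, vecMul_fromBlocks, sumElim_dotProduct_sumElim]
    simp only [Sum.elim_comp_inl, Sum.elim_comp_inr]
    simp only [Matrix.vecMul_add, Matrix.vecMul_neg, ← Matrix.vecMul_vecMul,
      eBcv, eqmv, eDrv, eSc, add_dotProduct, neg_dotProduct, eDot,
      sub_dotProduct, dotProduct]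
    simp only [Pi.add_apply, Pi.neg_apply, Pi.smul_apply, Fintype.sum_unique,
      smul_eq_mul, neg_smul, one_smul, neg_mul, one_mul, mul_one, neg_neg,
      add_mul, sub_mul, mul_add, mul_sub, Finset.sum_mul, Finset.mul_sum, mul_assoc,
      Finset.sum_add_distrib, Finset.sum_neg_distrib]
    abel
  rw [main]
  noncomm_ring
end

section
/- (Row homological relation for quasideterminants.) Let R be a (possibly noncommutative) ring with 1, n ≥ 1, A an n×n matrix over R, B and C column n-vectors over R, D and E row n-vectors over R, and f, g, h, i ∈ R. Assume A is invertible over R, and that both (n+1)×(n+1) block matrices K = [[A, B],[D, f]] and N = [[A, C],[D, g]] are invertible over R. Then h − (E, i) N^{-1} (B; f) = ( i − (E, h) K^{-1} (C; g) ) · ( 0 − (0,…,0,1) N^{-1} (B; f) ), where (0,…,0,1) is the row (n+1)-vector with 1 in the last position. -/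
open Matrix

private lemma stmt18_aux {R : Type*} [Ring R] (a b zb zc u v s2 φ γ : R)
    (hs : (γ - v) * s2 = 1) :
    (zb + b * φ) - ((zb + (b - a) * u) + a * φ)
      = (((zc + (b - a) * v) + a * γ) - (zc + b * γ)) * (0 - ((-s2) * u + s2 * φ)) := by
  have h1 : (((zc + (b - a) * v) + a * γ) - (zc + b * γ)) = -((b - a) * (γ - v)) := by
    noncomm_ring
  have h2 : (0 - ((-s2) * u + s2 * φ)) = -(s2 * (φ - u)) := by noncomm_ring
  rw [h1, h2, neg_mul_neg, mul_assoc, ← mul_assoc (γ - v), hs, one_mul]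
  noncomm_ring

/-- **Row homological relation for quasideterminants.**
`R` a possibly noncommutative ring with 1, `A` an invertible `n × n` matrix over `R`
(with a two-sided inverse), `B C` column `n`-vectors, `D E` row `n`-vectors, and
`f g h i ∈ R`.  Assume the `(n+1) × (n+1)` block matrices `K = [[A, B],[D, f]]` and
`N = [[A, C],[D, g]]` are invertible over `R`, with two-sided inverses `K'` and `N'`.
Then `h − (E, i) N⁻¹ (B; f) = (i − (E, h) K⁻¹ (C; g)) · (0 − (0,…,0,1) N⁻¹ (B; f))`. -/
theorem stmt18 {R : Type*} [Ring R] (n : ℕ) (hn : 1 ≤ n)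
    (A : Matrix (Fin n) (Fin n) R) (B C : Fin n → R) (D E : Fin n → R)
    (f g h i : R)
    (A' : Matrix (Fin n) (Fin n) R) (hA1 : A * A' = 1) (hA2 : A' * A = 1)
    (K' : Matrix (Fin n ⊕ Unit) (Fin n ⊕ Unit) R)
    (hK1 : Matrix.fromBlocks A (Matrix.of fun k (_ : Unit) => B k)
        (Matrix.of fun (_ : Unit) k => D k) (Matrix.of fun (_ : Unit) (_ : Unit) => f) * K' = 1)
    (hK2 : K' * Matrix.fromBlocks A (Matrix.of fun k (_ : Unit) => B k)
        (Matrix.of fun (_ : Unit) k => D k) (Matrix.of fun (_ : Unit) (_ : Unit) => f) = 1)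
    (N' : Matrix (Fin n ⊕ Unit) (Fin n ⊕ Unit) R)
    (hN1 : Matrix.fromBlocks A (Matrix.of fun k (_ : Unit) => C k)
        (Matrix.of fun (_ : Unit) k => D k) (Matrix.of fun (_ : Unit) (_ : Unit) => g) * N' = 1)
    (hN2 : N' * Matrix.fromBlocks A (Matrix.of fun k (_ : Unit) => C k)
        (Matrix.of fun (_ : Unit) k => D k) (Matrix.of fun (_ : Unit) (_ : Unit) => g) = 1) :
    h - (Sum.elim E (fun _ => i) ᵥ* N') ⬝ᵥ Sum.elim B (fun _ => f)
      = (i - (Sum.elim E (fun _ => h) ᵥ* K') ⬝ᵥ Sum.elim C (fun _ => g))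
        * (0 - (Sum.elim (0 : Fin n → R) (fun _ => 1) ᵥ* N') ⬝ᵥ Sum.elim B (fun _ => f)) := by
  classical
  set x : Fin n ⊕ Unit → R := Sum.elim E (fun _ => i) ᵥ* N' with hxdef
  set y : Fin n ⊕ Unit → R := Sum.elim (0 : Fin n → R) (fun _ => 1) ᵥ* N' with hydef
  set z : Fin n ⊕ Unit → R := Sum.elim E (fun _ => h) ᵥ* K' with hzdef
  set w : Fin n → R := D ᵥ* A' with hwdef
  -- row equations for x (from N' * N = 1)
  have hx : x ᵥ* Matrix.fromBlocks A (Matrix.of fun k (_ : Unit) => C k)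
      (Matrix.of fun (_ : Unit) k => D k) (Matrix.of fun (_ : Unit) (_ : Unit) => g)
      = Sum.elim E (fun _ => i) := by
    rw [hxdef, vecMul_vecMul, hN2, vecMul_one]
  have hxl : ∀ k, ((x ∘ Sum.inl) ᵥ* A) k + x (Sum.inr ()) * D k = E k := by
    intro k
    have := congrFun hx (Sum.inl k)
    rw [vecMul_fromBlocks] at this
    simpa [vecMul, dotProduct] using this
  have hxr : (x ∘ Sum.inl) ⬝ᵥ C + x (Sum.inr ()) * g = i := by
    have := congrFun hx (Sum.inr ())
    rw [vecMul_fromBlocks] at this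
    simpa [vecMul, dotProduct] using this
  -- row equations for y
  have hy : y ᵥ* Matrix.fromBlocks A (Matrix.of fun k (_ : Unit) => C k)
      (Matrix.of fun (_ : Unit) k => D k) (Matrix.of fun (_ : Unit) (_ : Unit) => g)
      = Sum.elim (0 : Fin n → R) (fun _ => 1) := by
    rw [hydef, vecMul_vecMul, hN2, vecMul_one]
  have hyl : ∀ k, ((y ∘ Sum.inl) ᵥ* A) k + y (Sum.inr ()) * D k = 0 := by
    intro k
    have := congrFun hy (Sum.inl k)
    rw [vecMul_fromBlocks] at this
    simpa [vecMul, dotProduct] using this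
  -- row equations for z (from K' * K = 1)
  have hz : z ᵥ* Matrix.fromBlocks A (Matrix.of fun k (_ : Unit) => B k)
      (Matrix.of fun (_ : Unit) k => D k) (Matrix.of fun (_ : Unit) (_ : Unit) => f)
      = Sum.elim E (fun _ => h) := by
    rw [hzdef, vecMul_vecMul, hK2, vecMul_one]
  have hzl : ∀ k, ((z ∘ Sum.inl) ᵥ* A) k + z (Sum.inr ()) * D k = E k := by
    intro k
    have := congrFun hz (Sum.inl k)
    rw [vecMul_fromBlocks] at this
    simpa [vecMul, dotProduct] using this
  have hzr : (z ∘ Sum.inl) ⬝ᵥ B + z (Sum.inr ()) * f = h := by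
    have := congrFun hz (Sum.inr ())
    rw [vecMul_fromBlocks] at this
    simpa [vecMul, dotProduct] using this
  -- key recovery lemma: u ᵥ* A = c • D  ⟹  u = c • w
  have key : ∀ (u : Fin n → R) (c : R), (∀ k, (u ᵥ* A) k = c * D k) → ∀ k, u k = c * w k := by
    intro u c hu k
    have h1 : (u ᵥ* A) ᵥ* A' = u := by rw [vecMul_vecMul, hA1, vecMul_one]
    calc u k = ((u ᵥ* A) ᵥ* A') k := by rw [h1]
      _ = ∑ j, (u ᵥ* A) j * A' j k := rfl
      _ = ∑ j, c * (D j * A' j k) := by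
          refine Finset.sum_congr rfl fun j _ => ?_
          rw [hu j, mul_assoc]
      _ = c * ∑ j, D j * A' j k := by rw [Finset.mul_sum]
      _ = c * w k := rfl
  -- dot product of a scaled vector
  have dotc : ∀ (c : R) (u v vv : Fin n → R), (∀ k, u k = c * v k) →
      u ⬝ᵥ vv = c * (v ⬝ᵥ vv) := by
    intro c u v vv hu
    calc u ⬝ᵥ vv = ∑ k, u k * vv k := rfl
      _ = ∑ k, c * (v k * vv k) := by
          refine Finset.sum_congr rfl fun k _ => ?_
          rw [hu k, mul_assoc]
      _ = c * ∑ k, v k * vv k := (Finset.mul_sum _ _ _).symm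
      _ = c * (v ⬝ᵥ vv) := rfl
  -- x∘inl - z∘inl = (z2 - x2) • w
  have hxz : ∀ k, (x ∘ Sum.inl) k - (z ∘ Sum.inl) k
      = (z (Sum.inr ()) - x (Sum.inr ())) * w k := by
    have hstep : ∀ k, (((x ∘ Sum.inl) - (z ∘ Sum.inl)) ᵥ* A) k
        = (z (Sum.inr ()) - x (Sum.inr ())) * D k := by
      intro k
      have e1 : ((x ∘ Sum.inl) ᵥ* A) k = E k - x (Sum.inr ()) * D k :=
        eq_sub_of_add_eq (hxl k)
      have e2 : ((z ∘ Sum.inl) ᵥ* A) k = E k - z (Sum.inr ()) * D k :=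
        eq_sub_of_add_eq (hzl k)
      have hsub : (((x ∘ Sum.inl) - (z ∘ Sum.inl)) ᵥ* A) k
          = ((x ∘ Sum.inl) ᵥ* A) k - ((z ∘ Sum.inl) ᵥ* A) k := by
        simp [vecMul, dotProduct, sub_mul, Finset.sum_sub_distrib]
      rw [hsub, e1, e2]; noncomm_ring
    intro k
    simpa using key ((x ∘ Sum.inl) - (z ∘ Sum.inl))
      (z (Sum.inr ()) - x (Sum.inr ())) hstep k
  -- y∘inl = (-y2) • w
  have hyw : ∀ k, (y ∘ Sum.inl) k = (-(y (Sum.inr ()))) * w k := by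
    apply key
    intro k
    have e : ((y ∘ Sum.inl) ᵥ* A) k = 0 - y (Sum.inr ()) * D k := eq_sub_of_add_eq (hyl k)
    rw [e]; noncomm_ring
  -- last column of N' : u = N' *ᵥ e
  set u : Fin n ⊕ Unit → R := N' *ᵥ Sum.elim (0 : Fin n → R) (fun _ => 1) with hudef
  have hu : Matrix.fromBlocks A (Matrix.of fun k (_ : Unit) => C k)
      (Matrix.of fun (_ : Unit) k => D k) (Matrix.of fun (_ : Unit) (_ : Unit) => g) *ᵥ u
      = Sum.elim (0 : Fin n → R) (fun _ => 1) := by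
    rw [hudef, mulVec_mulVec, hN1, one_mulVec]
  have hul : ∀ j, (A *ᵥ (u ∘ Sum.inl)) j + C j * u (Sum.inr ()) = 0 := by
    intro j
    have := congrFun hu (Sum.inl j)
    rw [fromBlocks_mulVec] at this
    simpa [mulVec, dotProduct] using this
  have hur : D ⬝ᵥ (u ∘ Sum.inl) + g * u (Sum.inr ()) = 1 := by
    have := congrFun hu (Sum.inr ())
    rw [fromBlocks_mulVec] at this
    simpa [mulVec, dotProduct] using this
  -- y2 = u2 (both are the bottom-right entry of N')
  have hy2u2 : y (Sum.inr ()) = u (Sum.inr ()) := by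
    rw [hydef, hudef]
    simp [vecMul, mulVec, dotProduct]
  -- D ⬝ᵥ u1 = -((w ⬝ᵥ C) * u2)
  have hAu : ∀ j, (A *ᵥ (u ∘ Sum.inl)) j = -(C j * u (Sum.inr ())) :=
    fun j => eq_neg_of_add_eq_zero_left (hul j)
  have hDu : D ⬝ᵥ (u ∘ Sum.inl) = -((w ⬝ᵥ C) * u (Sum.inr ())) := by
    have h1 : A' *ᵥ (A *ᵥ (u ∘ Sum.inl)) = u ∘ Sum.inl := by
      rw [mulVec_mulVec, hA2, one_mulVec]
    calc D ⬝ᵥ (u ∘ Sum.inl) = D ⬝ᵥ (A' *ᵥ (A *ᵥ (u ∘ Sum.inl))) := by rw [h1]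
      _ = (D ᵥ* A') ⬝ᵥ (A *ᵥ (u ∘ Sum.inl)) := (dotProduct_mulVec _ _ _)
      _ = ∑ j, w j * (A *ᵥ (u ∘ Sum.inl)) j := rfl
      _ = ∑ j, -(w j * C j * u (Sum.inr ())) := by
          refine Finset.sum_congr rfl fun j _ => ?_
          rw [hAu j, mul_neg, mul_assoc]
      _ = -(∑ j, w j * C j * u (Sum.inr ())) := by rw [Finset.sum_neg_distrib]
      _ = -((∑ j, w j * C j) * u (Sum.inr ())) := by rw [Finset.sum_mul]
      _ = -((w ⬝ᵥ C) * u (Sum.inr ())) := rfl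
  -- (g - w⬝C) * y2 = 1
  have hsy2 : (g - w ⬝ᵥ C) * y (Sum.inr ()) = 1 := by
    rw [hy2u2, sub_mul]
    rw [hDu] at hur
    rw [← hur]
    noncomm_ring
  -- dot products split over the sum type
  have dsplit : ∀ (p : Fin n ⊕ Unit → R) (v : Fin n → R) (c : R),
      p ⬝ᵥ Sum.elim v (fun _ => c) = (p ∘ Sum.inl) ⬝ᵥ v + p (Sum.inr ()) * c := by
    intro p v c
    simp [dotProduct, Fintype.sum_sum_type]
  -- scaled dot products
  have d2 : (x ∘ Sum.inl) ⬝ᵥ B = (z ∘ Sum.inl) ⬝ᵥ B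
      + (z (Sum.inr ()) - x (Sum.inr ())) * (w ⬝ᵥ B) := by
    have := dotc (z (Sum.inr ()) - x (Sum.inr ())) ((x ∘ Sum.inl) - (z ∘ Sum.inl)) w B
      (fun k => by simpa using hxz k)
    rw [sub_dotProduct] at this
    exact sub_eq_iff_eq_add'.mp this
  have d3 : (x ∘ Sum.inl) ⬝ᵥ C = (z ∘ Sum.inl) ⬝ᵥ C
      + (z (Sum.inr ()) - x (Sum.inr ())) * (w ⬝ᵥ C) := by
    have := dotc (z (Sum.inr ()) - x (Sum.inr ())) ((x ∘ Sum.inl) - (z ∘ Sum.inl)) w C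
      (fun k => by simpa using hxz k)
    rw [sub_dotProduct] at this
    exact sub_eq_iff_eq_add'.mp this
  have d4 : (y ∘ Sum.inl) ⬝ᵥ B = (-(y (Sum.inr ()))) * (w ⬝ᵥ B) :=
    dotc _ _ _ _ hyw
  -- finish
  rw [dsplit x B f, dsplit z C g, dsplit y B f, ← hzr, ← hxr, d2, d3, d4]
  exact stmt18_aux (x (Sum.inr ())) (z (Sum.inr ())) ((z ∘ Sum.inl) ⬝ᵥ B)
    ((z ∘ Sum.inl) ⬝ᵥ C) (w ⬝ᵥ B) (w ⬝ᵥ C) (y (Sum.inr ())) f g hsy2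
end

section
/- (Quasideterminant solution of noncommutative linear systems.) Let R be a (possibly noncommutative) ring with 1, n ≥ 2, and A = (a_{i,j}) an n×n matrix over R. For 1 ≤ i, j ≤ n, let A^{i,j} be the (n−1)×(n−1) matrix obtained from A by deleting row i and column j, r_i^j the i-th row of A with the j-th entry deleted, and c_j^i the j-th column of A with the i-th entry deleted, and define the quasideterminant |A|_{i,j} = a_{i,j} − r_i^j (A^{i,j})^{-1} c_j^i. Assume every A^{i,j} is invertible over R and every |A|_{i,j} is invertible in R. Then A is invertible over R, and for any ξ_1,…,ξ_n ∈ R the system Σ_{j=1}^n a_{i,j} x_j = ξ_i (1 ≤ i ≤ n) has the unique solution x_i = Σ_{j=1}^n |A|_{j,i}^{-1} ξ_j. -/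
/-!
Fix a position `(i, j)` and move row `i` and column `j` to the end: `A` becomes the block matrix
`[[A^{i,j}, c_j^i], [r_i^j, a_{i,j}]]`, whose Schur complement is the `1 × 1` matrix `|A|_{i,j}`.
The LDU factorization along this decomposition, which needs no commutativity, shows that `A` is
invertible as soon as one minor and its quasideterminant are. Comparing the bottom-right blocks of
`A * A⁻¹ = 1` then gives `|A|_{i,j} * (A⁻¹)_{j,i} = 1`, so `(A⁻¹)_{j,i} = |A|_{i,j}⁻¹` for every
`(i, j)`, and the unique solution of the system is `A⁻¹ ξ`.
-/

open Matrix

section FinSuccAbove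

variable {n : ℕ}

def finSuccAboveSumEquiv (i : Fin (n + 1)) : Fin n ⊕ Unit ≃ Fin (n + 1) :=
  ((finSuccEquiv' i).trans (Equiv.optionEquivSumPUnit _)).symm

@[simp]
theorem finSuccAboveSumEquiv_inl (i : Fin (n + 1)) (k : Fin n) :
    finSuccAboveSumEquiv i (Sum.inl k) = i.succAbove k := by
  simp [finSuccAboveSumEquiv]

@[simp]
theorem finSuccAboveSumEquiv_inr (i : Fin (n + 1)) (u : Unit) :
    finSuccAboveSumEquiv i (Sum.inr u) = i := by
  simp [finSuccAboveSumEquiv]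

end FinSuccAbove

namespace Matrix

theorem submatrix_finSuccAboveSumEquiv {α : Type*} {n : ℕ}
    (A : Matrix (Fin (n + 1)) (Fin (n + 1)) α) (i j : Fin (n + 1)) :
    A.submatrix (finSuccAboveSumEquiv i) (finSuccAboveSumEquiv j) =
      fromBlocks (A.submatrix i.succAbove j.succAbove) (of fun k (_ : Unit) => A (i.succAbove k) j)
        (of fun (_ : Unit) k => A i (j.succAbove k)) (of fun _ _ => A i j) := by
  ext (k | _) (l | _) <;> simp

section Blocks

variable {m n α : Type*} [Fintype m] [Fintype n] [DecidableEq m] [DecidableEq n] [Ring α]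

theorem isUnit_of_isUnit_submatrix_equiv {A : Matrix m m α} (e₁ e₂ : n ≃ m)
    (h : IsUnit (A.submatrix e₁ e₂)) : IsUnit A := by
  obtain ⟨u, hu⟩ := h
  have hA : A = (u : Matrix n n α).submatrix e₁.symm e₂.symm := by simp [hu]
  refine ⟨⟨A, (↑u⁻¹ : Matrix n n α).submatrix e₂.symm e₁.symm, ?_, ?_⟩, rfl⟩
  · rw [hA, submatrix_mul_equiv, u.mul_inv, submatrix_one_equiv]
  · rw [hA, submatrix_mul_equiv, u.inv_mul, submatrix_one_equiv]

theorem mulVec_eq_iff_eq_inv_mulVec (u : (Matrix n n α)ˣ) (x ξ : n → α) :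
    (u : Matrix n n α) *ᵥ x = ξ ↔ x = (↑u⁻¹ : Matrix n n α) *ᵥ ξ := by
  constructor <;> rintro rfl <;> simp [mulVec_mulVec]

theorem isUnit_fromBlocks_one_zero_one (X : Matrix n m α) :
    IsUnit (fromBlocks (1 : Matrix m m α) 0 X (1 : Matrix n n α)) :=
  ⟨⟨fromBlocks 1 0 X 1, fromBlocks 1 0 (-X) (1 : Matrix n n α),
    by simp [fromBlocks_multiply], by simp [fromBlocks_multiply]⟩, rfl⟩

theorem isUnit_fromBlocks_one_one_zero (X : Matrix m n α) :
    IsUnit (fromBlocks (1 : Matrix m m α) X 0 (1 : Matrix n n α)) :=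
  ⟨⟨fromBlocks 1 X 0 1, fromBlocks 1 (-X) 0 (1 : Matrix n n α),
    by simp [fromBlocks_multiply], by simp [fromBlocks_multiply]⟩, rfl⟩

theorem isUnit_fromBlocks_zero_zero {A : Matrix m m α} {D : Matrix n n α} (hA : IsUnit A)
    (hD : IsUnit D) : IsUnit (fromBlocks A 0 0 D) := by
  obtain ⟨u, rfl⟩ := hA
  obtain ⟨v, rfl⟩ := hD
  refine ⟨⟨fromBlocks ↑u 0 0 ↑v, fromBlocks ↑u⁻¹ 0 0 ↑v⁻¹, ?_, ?_⟩, rfl⟩ <;>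
    simp only [fromBlocks_multiply, Units.mul_inv, Units.inv_mul, Matrix.mul_zero,
      Matrix.zero_mul, add_zero, zero_add, fromBlocks_one]

variable {A E : Matrix m m α} {B : Matrix m n α} {C : Matrix n m α} {D : Matrix n n α}

theorem fromBlocks_eq_ldu (hAE : A * E = 1) (hEA : E * A = 1) :
    fromBlocks A B C D =
      fromBlocks 1 0 (C * E) 1 * fromBlocks A 0 0 (D - C * E * B) * fromBlocks 1 (E * B) 0 1 := by
  simp only [fromBlocks_multiply, Matrix.mul_zero, Matrix.zero_mul, add_zero, zero_add,
    Matrix.one_mul, Matrix.mul_one, ← Matrix.mul_assoc, hAE]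
  simp only [Matrix.mul_assoc, hEA, Matrix.mul_one, add_sub_cancel]

theorem isUnit_fromBlocks_of_isUnit_schur (hAE : A * E = 1) (hEA : E * A = 1)
    (hS : IsUnit (D - C * E * B)) : IsUnit (fromBlocks A B C D) := by
  rw [fromBlocks_eq_ldu hAE hEA]
  exact ((isUnit_fromBlocks_one_zero_one _).mul
    (isUnit_fromBlocks_zero_zero ⟨⟨A, E, hAE, hEA⟩, rfl⟩ hS)).mul
    (isUnit_fromBlocks_one_one_zero _)

theorem schur_mul_toBlocks₂₂_eq_one {N : Matrix (m ⊕ n) (m ⊕ n) α}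
    (hN : fromBlocks A B C D * N = 1) (hEA : E * A = 1) :
    (D - C * E * B) * N.toBlocks₂₂ = 1 := by
  rw [← fromBlocks_toBlocks N, fromBlocks_multiply, ← fromBlocks_one, fromBlocks_inj] at hN
  obtain ⟨-, h₁₂, -, h₂₂⟩ := hN
  have hN₁₂ : N.toBlocks₁₂ = -(E * B * N.toBlocks₂₂) := by
    calc N.toBlocks₁₂ = E * (A * N.toBlocks₁₂) := by rw [← Matrix.mul_assoc, hEA, Matrix.one_mul]
      _ = -(E * B * N.toBlocks₂₂) := by
        rw [eq_neg_of_add_eq_zero_left h₁₂, Matrix.mul_neg, Matrix.mul_assoc]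
  rw [← h₂₂, hN₁₂, Matrix.sub_mul, Matrix.mul_neg]
  simp only [Matrix.mul_assoc]
  abel

end Blocks

section Quasideterminant

variable {R : Type*} [Ring R] {n : ℕ}

-- `E` stands for `(A^{i,j})⁻¹`, which over a noncommutative ring has to be supplied.
def quasidet (A : Matrix (Fin (n + 1)) (Fin (n + 1)) R) (i j : Fin (n + 1))
    (E : Matrix (Fin n) (Fin n) R) : R :=
  A i j - ((fun k => A i (j.succAbove k)) ᵥ* E) ⬝ᵥ (fun k => A (i.succAbove k) j)

theorem of_quasidet_eq_schur (A : Matrix (Fin (n + 1)) (Fin (n + 1)) R) (i j : Fin (n + 1))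
    (E : Matrix (Fin n) (Fin n) R) :
    of (fun _ _ : Unit => quasidet A i j E) =
      of (fun _ _ => A i j) - of (fun (_ : Unit) k => A i (j.succAbove k)) * E *
        of fun k (_ : Unit) => A (i.succAbove k) j := by
  ext
  simp [quasidet, mul_apply, vecMul, dotProduct, Finset.sum_mul]

variable {A : Matrix (Fin (n + 1)) (Fin (n + 1)) R} {i j : Fin (n + 1)}
  {E : Matrix (Fin n) (Fin n) R}

theorem isUnit_of_isUnit_quasidet (hAE : A.submatrix i.succAbove j.succAbove * E = 1)
    (hEA : E * A.submatrix i.succAbove j.succAbove = 1) (hq : IsUnit (quasidet A i j E)) :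
    IsUnit A := by
  apply isUnit_of_isUnit_submatrix_equiv (finSuccAboveSumEquiv i) (finSuccAboveSumEquiv j)
  rw [submatrix_finSuccAboveSumEquiv]
  refine isUnit_fromBlocks_of_isUnit_schur hAE hEA ?_
  rw [← of_quasidet_eq_schur]
  simpa using hq.map (uniqueRingEquiv (m := Unit)).symm

theorem quasidet_mul_apply_eq_one {B : Matrix (Fin (n + 1)) (Fin (n + 1)) R} (hAB : A * B = 1)
    (hEA : E * A.submatrix i.succAbove j.succAbove = 1) : quasidet A i j E * B j i = 1 := by
  have hN : A.submatrix (finSuccAboveSumEquiv i) (finSuccAboveSumEquiv j) *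
      B.submatrix (finSuccAboveSumEquiv j) (finSuccAboveSumEquiv i) = 1 := by
    rw [submatrix_mul_equiv, hAB, submatrix_one_equiv]
  rw [submatrix_finSuccAboveSumEquiv] at hN
  have := congr_fun₂ (schur_mul_toBlocks₂₂_eq_one hN hEA) () ()
  rw [← of_quasidet_eq_schur] at this
  simpa [mul_apply, toBlocks₂₂] using this

end Quasideterminant

end Matrix

theorem stmt19_general {R : Type*} [Ring R] (n : ℕ)
    (A : Matrix (Fin (n + 1)) (Fin (n + 1)) R)
    (Ainv : Fin (n + 1) → Fin (n + 1) → Matrix (Fin n) (Fin n) R)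
    (hAinv1 : ∀ i j, A.submatrix i.succAbove j.succAbove * Ainv i j = 1)
    (hAinv2 : ∀ i j, Ainv i j * A.submatrix i.succAbove j.succAbove = 1)
    (q : Fin (n + 1) → Fin (n + 1) → R)
    (hq1 : ∀ i j, (A i j - ((fun k => A i (j.succAbove k)) ᵥ* Ainv i j)
        ⬝ᵥ (fun k => A (i.succAbove k) j)) * q i j = 1)
    (hq2 : ∀ i j, q i j * (A i j - ((fun k => A i (j.succAbove k)) ᵥ* Ainv i j)
        ⬝ᵥ (fun k => A (i.succAbove k) j)) = 1) :
    IsUnit A ∧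
    ∀ ξ x : Fin (n + 1) → R,
      ((∀ i, ∑ j, A i j * x j = ξ i) ↔ x = fun i => ∑ j, q j i * ξ j) := by
  obtain ⟨u, rfl⟩ : IsUnit A :=
    isUnit_of_isUnit_quasidet (hAinv1 0 0) (hAinv2 0 0) ⟨⟨_, q 0 0, hq1 0 0, hq2 0 0⟩, rfl⟩
  have hinv (i j) : (↑u⁻¹ : Matrix _ _ R) j i = q i j :=
    (left_inv_eq_right_inv (hq2 i j) (quasidet_mul_apply_eq_one u.mul_inv (hAinv2 i j))).symm
  refine ⟨u.isUnit, fun ξ x => ?_⟩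
  have hsol : (fun i => ∑ j, q j i * ξ j) = (↑u⁻¹ : Matrix _ _ R) *ᵥ ξ := by
    ext i
    simp [mulVec, dotProduct, hinv]
  rw [hsol, ← mulVec_eq_iff_eq_inv_mulVec, funext_iff]
  rfl

/-- **Quasideterminant solution of noncommutative linear systems.**
`R` a possibly noncommutative ring with 1, `A` an `N × N` matrix over `R` with `N = n + 1 ≥ 2`.
For each position `(i,j)` let `A^{i,j}` be the submatrix obtained by deleting row `i` and
column `j`, `r_i^j` the `i`-th row with the `j`-th entry deleted, `c_j^i` the `j`-th column
with the `i`-th entry deleted, and `|A|_{i,j} = a_{i,j} − r_i^j (A^{i,j})⁻¹ c_j^i` the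
quasideterminant.  Assume every `A^{i,j}` is invertible over `R` (with two-sided inverse
`Ainv i j`) and every `|A|_{i,j}` is invertible in `R` (with two-sided inverse `q i j`).
Then `A` is invertible over `R`, and for any `ξ`, the system `Σ_j a_{i,j} x_j = ξ_i`
has the unique solution `x_i = Σ_j |A|_{j,i}⁻¹ ξ_j`. -/
theorem stmt19 {R : Type*} [Ring R] (n : ℕ) (hn : 1 ≤ n)
    (A : Matrix (Fin (n + 1)) (Fin (n + 1)) R)
    (Ainv : Fin (n + 1) → Fin (n + 1) → Matrix (Fin n) (Fin n) R)
    (hAinv1 : ∀ i j, A.submatrix i.succAbove j.succAbove * Ainv i j = 1)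
    (hAinv2 : ∀ i j, Ainv i j * A.submatrix i.succAbove j.succAbove = 1)
    (q : Fin (n + 1) → Fin (n + 1) → R)
    (hq1 : ∀ i j, (A i j - ((fun k => A i (j.succAbove k)) ᵥ* Ainv i j)
        ⬝ᵥ (fun k => A (i.succAbove k) j)) * q i j = 1)
    (hq2 : ∀ i j, q i j * (A i j - ((fun k => A i (j.succAbove k)) ᵥ* Ainv i j)
        ⬝ᵥ (fun k => A (i.succAbove k) j)) = 1) :
    IsUnit A ∧
    ∀ ξ x : Fin (n + 1) → R,
      ((∀ i, ∑ j, A i j * x j = ξ i) ↔ x = fun i => ∑ j, q j i * ξ j) :=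
  stmt19_general n A Ainv hAinv1 hAinv2 q hq1 hq2
end
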